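/- arXiv:1707.07201 — 10 statements merged into one kernel-verified Lean document; each statement's English description precedes it below -/
import Mathlib

section
/- Let m ≥ 1 and N ≥ 1 be integers. Define a = N mod m if m does not divide N, and a = m if m divides N. Then for every integer t with a ≤ t ≤ m, we have ⌈(N − t)/m⌉ = ⌈N/m⌉ − 1. -/
lemma ceil_div_eq_of_bounds (m a q : ℤ) (hm : 0 < m)
    (h1 : m * (q - 1) < a) (h2 : a ≤ m * q) : ⌈(a : ℚ) / (m : ℚ)⌉ = q := by
  have hm' : (0 : ℚ) < (m : ℚ) := by exact_mod_cast hm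
  rw [Int.ceil_eq_iff]
  have h1' : (q - 1) * m < a := by nlinarith
  have h2' : a ≤ q * m := by nlinarith
  constructor
  · rw [lt_div_iff₀ hm']
    exact_mod_cast h1'
  · rw [div_le_iff₀ hm']
    exact_mod_cast h2'

/-- **Chocolate Stones invariant.** Let `m ≥ 1` and `N ≥ 1` be integers, and let
`a = N % m` if `m` does not divide `N`, and `a = m` otherwise. Then for every
integer `t` with `a ≤ t ≤ m`, we have `⌈(N - t)/m⌉ = ⌈N/m⌉ - 1`. -/
theorem chocolate_stones_move_decreases_value (m N : ℤ) (hm : 1 ≤ m) (hN : 1 ≤ N)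
    (a : ℤ) (ha : a = if m ∣ N then m else N % m)
    (t : ℤ) (hat : a ≤ t) (htm : t ≤ m) :
    ⌈((N : ℚ) - (t : ℚ)) / (m : ℚ)⌉ = ⌈(N : ℚ) / (m : ℚ)⌉ - 1 := by
  have hm0 : 0 < m := hm
  have key : ∀ q : ℤ, m * (q - 1) < N - t → N - t ≤ m * q →
      m * ((q + 1) - 1) < N → N ≤ m * (q + 1) →
      ⌈((N : ℚ) - (t : ℚ)) / (m : ℚ)⌉ = ⌈(N : ℚ) / (m : ℚ)⌉ - 1 := by
    intro q h1 h2 h3 h4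
    have e1 : ⌈((N : ℚ) - (t : ℚ)) / (m : ℚ)⌉ = q := by
      have := ceil_div_eq_of_bounds m (N - t) q hm0 h1 h2
      push_cast at this
      exact this
    have e2 : ⌈(N : ℚ) / (m : ℚ)⌉ = q + 1 := ceil_div_eq_of_bounds m N (q + 1) hm0 h3 h4
    rw [e1, e2]; ring
  by_cases hd : m ∣ N
  · rw [if_pos hd] at ha
    have ht : t = m := le_antisymm htm (ha ▸ hat)
    obtain ⟨k, hk⟩ := hd
    have hk1 : 1 ≤ k := by nlinarith
    refine key (k - 1) ?_ ?_ ?_ ?_ <;> nlinarith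
  · rw [if_neg hd] at ha
    set q := N / m with hq
    have hr : N % m + m * q = N := Int.emod_add_mul_ediv N m
    have hr0 : 0 ≤ N % m := Int.emod_nonneg N (by omega)
    have hrm : N % m < m := Int.emod_lt_of_pos N hm0
    have hrne : N % m ≠ 0 := fun h => hd (Int.dvd_of_emod_eq_zero h)
    have e1 : m * (q - 1) = m * q - m := by ring
    have e2 : m * ((q + 1) - 1) = m * q := by ring
    have e3 : m * (q + 1) = m * q + m := by ring
    refine key q ?_ ?_ ?_ ?_ <;> omega
end

section
/- Fix an integer m ≥ 1. Every sequence of legal moves in the Chocolate Stones game that starts at a pile of N stones and ends at a position with no legal moves (i.e., the empty pile) consists of exactly ⌈N/m⌉ moves. In particular, the length of the game does not depend on the players' choices. -/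
/-- A legal move in the Chocolate Stones game with parameter `m`: from a pile of
`p ≥ 1` stones one may remove `t` stones where `a ≤ t ≤ m`, with `a = p % m` if
`m` does not divide `p` and `a = m` if `m` divides `p`. -/
def ChocMove (m p q : ℕ) : Prop :=
  1 ≤ p ∧ ∃ t : ℕ, (if m ∣ p then m else p % m) ≤ t ∧ t ≤ m ∧ q = p - t

lemma choc_ceil_eq (m x k : ℕ) (hm : 1 ≤ m) (h1 : m * k < x + m) (h2 : x ≤ m * k) :
    x ⌈/⌉ m = k := by
  rw [Nat.ceilDiv_eq_add_pred_div]
  apply Nat.div_eq_of_lt_le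
  · rw [Nat.mul_comm]; omega
  · have : (k + 1) * m = m * k + m := by ring
    omega

lemma choc_step (m p q : ℕ) (hm : 1 ≤ m) (h : ChocMove m p q) :
    p ⌈/⌉ m = q ⌈/⌉ m + 1 := by
  obtain ⟨hp, t, hat, htm, rfl⟩ := h
  by_cases hd : m ∣ p
  · simp only [hd, if_true] at hat
    have ht : t = m := le_antisymm htm hat
    rw [ht]
    obtain ⟨j, rfl⟩ := hd
    have hj : 1 ≤ j := by
      rcases Nat.eq_zero_or_pos j with rfl | h
      · simp at hp
      · exact h
    have e1 : (m * j) ⌈/⌉ m = j := choc_ceil_eq m _ j hm (by omega) le_rfl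
    have e2 : (m * j - m) ⌈/⌉ m = j - 1 := by
      apply choc_ceil_eq m _ _ hm
      · have : m * (j - 1) + m = m * j := by
          cases j with
          | zero => omega
          | succ n => simp [Nat.mul_succ]
        omega
      · have : m * (j - 1) + m = m * j := by
          cases j with
          | zero => omega
          | succ n => simp [Nat.mul_succ]
        omega
    rw [e1, e2]; omega
  · simp only [hd, if_false] at hat
    have hr : 1 ≤ p % m := by
      rcases Nat.eq_zero_or_pos (p % m) with h0 | h1
      · exact absurd (Nat.dvd_of_mod_eq_zero h0) hd
      · exact h1
    have hrm : p % m < m := Nat.mod_lt _ hm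
    have hpm : m * (p / m) + p % m = p := Nat.div_add_mod p m
    have e1 : p ⌈/⌉ m = p / m + 1 := by
      apply choc_ceil_eq m _ _ hm
      · have : m * (p / m + 1) = m * (p / m) + m := by ring
        omega
      · have : m * (p / m + 1) = m * (p / m) + m := by ring
        omega
    by_cases hpt : t ≤ p
    · have e2 : (p - t) ⌈/⌉ m = p / m := by
        apply choc_ceil_eq m _ _ hm <;> omega
      rw [e1, e2]
    · have hq0 : p - t = 0 := by omega
      have hj0 : p / m = 0 := Nat.div_eq_of_lt (by omega)
      rw [e1, hq0, hj0]
      simp [Nat.ceilDiv_eq_add_pred_div, Nat.div_eq_of_lt, hm]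

/-- **Chocolate Stones game length.** Fix `m ≥ 1`. Every sequence of legal moves
starting at a pile of `N` stones and ending at a position with no legal moves
consists of exactly `⌈N/m⌉` moves; in particular the length of the game does not
depend on the players' choices. -/
theorem chocolate_stones_game_length (m : ℕ) (hm : 1 ≤ m) (N L : ℕ) (f : ℕ → ℕ)
    (hstart : f 0 = N)
    (hstep : ∀ i < L, ChocMove m (f i) (f (i + 1)))
    (hend : ∀ q : ℕ, ¬ ChocMove m (f L) q) :
    L = N ⌈/⌉ m := by
  have hL0 : f L = 0 := by
    by_contra h
    have h1 : 1 ≤ f L := Nat.one_le_iff_ne_zero.mpr h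
    set a := if m ∣ f L then m else f L % m with ha
    exact hend (f L - a) ⟨h1, a, le_rfl, by
      by_cases hd : m ∣ f L
      · simp [ha, hd]
      · simp only [ha, hd, if_false]; exact le_of_lt (Nat.mod_lt _ hm), rfl⟩
  have key : ∀ i ≤ L, N ⌈/⌉ m = i + f i ⌈/⌉ m := by
    intro i hi
    induction i with
    | zero => simp [hstart]
    | succ n ih =>
      have hn : n ≤ L := Nat.le_of_succ_le hi
      rw [ih hn, choc_step m (f n) (f (n + 1)) hm (hstep n hi)]
      omega
  have := key L le_rfl
  rw [hL0] at this
  have h0 : (0 : ℕ) ⌈/⌉ m = 0 := choc_ceil_eq m 0 0 hm (by omega) (by simp)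
  rw [h0] at this
  omega
end

section
/- Fix an integer m ≥ 1. In the Chocolate Stones game, a pile of N stones is a P-position if and only if ⌈N/m⌉ is even. -/
/-- Generic P-position predicate for an impartial game whose moves strictly
decrease a natural-number measure: a position is a P-position iff every legal
move from it leads to a position that is not a P-position. -/
def IsP {α : Type*} (f : α → ℕ) (Move : α → α → Prop)
    (hf : ∀ ⦃s t : α⦄, Move s t → f t < f s) (s : α) : Prop :=
  ∀ t : α, (h : Move s t) → ¬ IsP f Move hf t
termination_by f s
decreasing_by exact hf h

theorem chocMove_lt (m : ℕ) : ∀ ⦃p q : ℕ⦄, ChocMove m p q → q < p := by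
  rintro p q ⟨hp, t, hat, htm, rfl⟩
  apply Nat.sub_lt hp
  by_cases h : m ∣ p
  · rw [if_pos h] at hat
    rcases Nat.eq_zero_or_pos m with hm | hm
    · subst hm
      have := Nat.eq_zero_of_zero_dvd h
      omega
    · omega
  · rw [if_neg h] at hat
    have : p % m ≠ 0 := fun h0 => h (Nat.dvd_of_mod_eq_zero h0)
    omega

/-- P-positions of the Chocolate Stones game with parameter `m`. -/
def ChocP (m : ℕ) : ℕ → Prop := IsP id (ChocMove m) (chocMove_lt m)

lemma ceil_of_bounds {m k q : ℕ} (hm : 1 ≤ m) (h1 : m * k < q + m) (h2 : q ≤ m * k) :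
    q ⌈/⌉ m = k := by
  rw [Nat.ceilDiv_eq_add_pred_div]
  apply Nat.div_eq_of_lt_le
  · rw [mul_comm]; omega
  · have : (k + 1) * m = m * k + m := by ring
    omega

lemma move_ceil {m : ℕ} (hm : 1 ≤ m) {N q : ℕ} (h : ChocMove m N q) :
    q ⌈/⌉ m + 1 = N ⌈/⌉ m := by
  obtain ⟨hN, t, hat, htm, rfl⟩ := h
  have hNe : m * (N / m) + N % m = N := Nat.div_add_mod N m
  have hrlt : N % m < m := Nat.mod_lt _ hm
  set k := N / m with hk
  by_cases hd : m ∣ N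
  · rw [if_pos hd] at hat
    have ht : t = m := le_antisymm htm hat
    have hr0 : N % m = 0 := Nat.mod_eq_zero_of_dvd hd
    have hk1 : 1 ≤ k := (Nat.one_le_div_iff (by omega)).mpr (Nat.le_of_dvd (by omega) hd)
    have hmk : m * (k - 1) + m = m * k := by
      have : m * (k - 1 + 1) = m * (k - 1) + m := by ring
      rw [Nat.sub_add_cancel hk1] at this
      omega
    have e1 : N ⌈/⌉ m = k := ceil_of_bounds hm (by omega) (by omega)
    have e2 : (N - t) ⌈/⌉ m = k - 1 := ceil_of_bounds hm (by omega) (by omega)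
    omega
  · rw [if_neg hd] at hat
    have hr1 : 1 ≤ N % m := by
      rcases Nat.eq_zero_or_pos (N % m) with h0 | h0
      · exact absurd (Nat.dvd_of_mod_eq_zero h0) hd
      · exact h0
    have hmk : m * (k + 1) = m * k + m := by ring
    have e1 : N ⌈/⌉ m = k + 1 := ceil_of_bounds hm (by omega) (by omega)
    have e2 : (N - t) ⌈/⌉ m = k := ceil_of_bounds hm (by omega) (by omega)
    omega

lemma exists_move {m N : ℕ} (hm : 1 ≤ m) (hN : 1 ≤ N) : ChocMove m N (N - m) := by
  refine ⟨hN, m, ?_, le_refl m, rfl⟩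
  by_cases hd : m ∣ N
  · rw [if_pos hd]
  · rw [if_neg hd]; exact le_of_lt (Nat.mod_lt _ hm)

/-- **Chocolate Stones P-positions.** Fix `m ≥ 1`. A pile of `N` stones is a
P-position if and only if `⌈N/m⌉` is even. -/
theorem chocolate_stones_P_positions (m : ℕ) (hm : 1 ≤ m) (N : ℕ) :
    ChocP m N ↔ Even (N ⌈/⌉ m) := by
  induction N using Nat.strong_induction_on with
  | _ N ih =>
    rw [ChocP, IsP]
    constructor
    · intro h
      rcases Nat.eq_zero_or_pos N with h0 | h0
      · subst h0
        simp [Nat.ceilDiv_eq_add_pred_div, Nat.div_eq_of_lt (by omega : m - 1 < m)]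
      · have hmv := exists_move hm h0
        have hnp := h _ hmv
        have hlt : N - m < N := chocMove_lt m hmv
        have := ih _ hlt
        have hc := move_ceil hm hmv
        rw [Nat.even_iff] at *
        have : ¬ ((N - m) ⌈/⌉ m) % 2 = 0 := fun he => hnp ((ih _ hlt).mpr (Nat.even_iff.mpr he))
        omega
    · intro h q hmv hq
      have hlt : q < N := chocMove_lt m hmv
      have hc := move_ceil hm hmv
      have := (ih _ hlt).mp hq
      rw [Nat.even_iff] at h this
      omega
end

section
/- Let S be a finite subset of ℤ × ℤ such that (i) no token of S lies on either axis, i.e., for every (a,b) ∈ S, a ≠ 0 and b ≠ 0, and (ii) S is symmetric with respect to both axes, i.e., (a,b) ∈ S implies (−a,b) ∈ S and (a,−b) ∈ S. Then S is a P-position of the Diamond game (the second player wins). -/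
/-- A legal move in the Diamond game: remove all tokens in some nonempty row
(all tokens with a given second coordinate) or some nonempty column (all tokens
with a given first coordinate). -/
def DiamondMove (S T : Finset (ℤ × ℤ)) : Prop :=
  (∃ r : ℤ, (∃ p ∈ S, p.2 = r) ∧ T = S.filter (fun p => p.2 ≠ r)) ∨
  (∃ c : ℤ, (∃ p ∈ S, p.1 = c) ∧ T = S.filter (fun p => p.1 ≠ c))

theorem diamondMove_lt : ∀ ⦃S T : Finset (ℤ × ℤ)⦄, DiamondMove S T → T.card < S.card := by
  rintro S T (⟨r, ⟨p, hpS, hpr⟩, rfl⟩ | ⟨c, ⟨p, hpS, hpc⟩, rfl⟩)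
  · exact Finset.card_lt_card (Finset.filter_ssubset.mpr ⟨p, hpS, by simp [hpr]⟩)
  · exact Finset.card_lt_card (Finset.filter_ssubset.mpr ⟨p, hpS, by simp [hpc]⟩)

/-- P-positions of the Diamond game. -/
def DiamondP : Finset (ℤ × ℤ) → Prop := IsP Finset.card DiamondMove diamondMove_lt


lemma isP_iff {α : Type*} (f : α → ℕ) (Move : α → α → Prop)
    (hf : ∀ ⦃s t : α⦄, Move s t → f t < f s) (s : α) :
    IsP f Move hf s ↔ ∀ t : α, Move s t → ¬ IsP f Move hf t := by
  rw [IsP]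

lemma diamond_aux : ∀ n : ℕ, ∀ S : Finset (ℤ × ℤ), S.card < n →
    (∀ p ∈ S, p.1 ≠ 0 ∧ p.2 ≠ 0) →
    (∀ a b : ℤ, (a, b) ∈ S → (-a, b) ∈ S ∧ (a, -b) ∈ S) →
    DiamondP S := by
  intro n
  induction n with
  | zero => intro S h; omega
  | succ n ih =>
    intro S hcard hoff hsym
    rw [DiamondP, isP_iff]
    rintro T (⟨r, ⟨p, hpS, hpr⟩, rfl⟩ | ⟨c, ⟨p, hpS, hpc⟩, rfl⟩) <;> intro hT
    · have hr0 : r ≠ 0 := hpr ▸ (hoff p hpS).2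
      have hmir : (p.1, -r) ∈ S := by
        have := (hsym p.1 p.2 hpS).2; rwa [hpr] at this
      have hmirT : (p.1, -r) ∈ S.filter (fun q => q.2 ≠ r) :=
        Finset.mem_filter.mpr ⟨hmir, by simp; omega⟩
      have hmove : DiamondMove (S.filter (fun q => q.2 ≠ r))
          ((S.filter (fun q => q.2 ≠ r)).filter (fun q => q.2 ≠ -r)) :=
        Or.inl ⟨-r, ⟨(p.1, -r), hmirT, rfl⟩, rfl⟩
      set U := (S.filter (fun q => q.2 ≠ r)).filter (fun q => q.2 ≠ -r) with hU
      have hUmem : ∀ q : ℤ × ℤ, q ∈ U ↔ q ∈ S ∧ q.2 ≠ r ∧ q.2 ≠ -r := by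
        intro q; simp [hU, Finset.mem_filter, and_assoc]
      have hPU : DiamondP U := by
        apply ih U _ (fun q hq => hoff q ((hUmem q).mp hq).1)
        · intro a b hab
          obtain ⟨habS, h1, h2⟩ := (hUmem (a,b)).mp hab
          obtain ⟨h3, h4⟩ := hsym a b habS
          exact ⟨(hUmem _).mpr ⟨h3, h1, h2⟩, (hUmem _).mpr ⟨h4, by simp at h1 h2 ⊢; omega⟩⟩
        · calc U.card ≤ (S.filter (fun q => q.2 ≠ r)).card :=
                Finset.card_le_card (Finset.filter_subset _ _)
            _ < S.card := diamondMove_lt (Or.inl ⟨r, ⟨p, hpS, hpr⟩, rfl⟩)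
            _ ≤ n := by omega
      exact ((isP_iff _ _ _ _).mp hT U hmove) hPU
    · have hc0 : c ≠ 0 := hpc ▸ (hoff p hpS).1
      have hmir : (-c, p.2) ∈ S := by
        have := (hsym p.1 p.2 hpS).1; rwa [hpc] at this
      have hmirT : (-c, p.2) ∈ S.filter (fun q => q.1 ≠ c) :=
        Finset.mem_filter.mpr ⟨hmir, by simp; omega⟩
      have hmove : DiamondMove (S.filter (fun q => q.1 ≠ c))
          ((S.filter (fun q => q.1 ≠ c)).filter (fun q => q.1 ≠ -c)) :=
        Or.inr ⟨-c, ⟨(-c, p.2), hmirT, rfl⟩, rfl⟩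
      set U := (S.filter (fun q => q.1 ≠ c)).filter (fun q => q.1 ≠ -c) with hU
      have hUmem : ∀ q : ℤ × ℤ, q ∈ U ↔ q ∈ S ∧ q.1 ≠ c ∧ q.1 ≠ -c := by
        intro q; simp [hU, Finset.mem_filter, and_assoc]
      have hPU : DiamondP U := by
        apply ih U _ (fun q hq => hoff q ((hUmem q).mp hq).1)
        · intro a b hab
          obtain ⟨habS, h1, h2⟩ := (hUmem (a,b)).mp hab
          obtain ⟨h3, h4⟩ := hsym a b habS
          exact ⟨(hUmem _).mpr ⟨h3, by simp at h1 h2 ⊢; omega⟩, (hUmem _).mpr ⟨h4, h1, h2⟩⟩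
        · calc U.card ≤ (S.filter (fun q => q.1 ≠ c)).card :=
                Finset.card_le_card (Finset.filter_subset _ _)
            _ < S.card := diamondMove_lt (Or.inr ⟨c, ⟨p, hpS, hpc⟩, rfl⟩)
            _ ≤ n := by omega
      exact ((isP_iff _ _ _ _).mp hT U hmove) hPU

/-- **Off-axis doubly symmetric positions are P-positions.** If a finite set of
tokens `S ⊆ ℤ × ℤ` has no token on either axis and is symmetric with respect to
both axes, then `S` is a P-position of the Diamond game (the second player wins). -/
theorem diamond_symmetric_P (S : Finset (ℤ × ℤ))
    (h_off_axes : ∀ p ∈ S, p.1 ≠ 0 ∧ p.2 ≠ 0)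
    (h_symm : ∀ a b : ℤ, (a, b) ∈ S → (-a, b) ∈ S ∧ (a, -b) ∈ S) :
    DiamondP S := by
  exact diamond_aux (S.card+1) S (by omega) h_off_axes h_symm
end

section
/- For every integer c ≥ 1, the diamond D_c = {(a,b) ∈ ℤ × ℤ : |a| + |b| ≤ c} is a P-position of the Diamond game (the second player wins). -/
namespace DiamondAux

abbrev Pos := Finset (ℤ × ℤ)

def Stair (S : Pos) : Prop := ∀ p ∈ S, ∀ q ∈ S,
  (|q.1| ≤ |p.1| → (q.1, p.2) ∈ S) ∧ (|q.2| ≤ |p.2| → (p.1, q.2) ∈ S)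

def SymXY (S : Pos) : Prop := ∀ p ∈ S, (-p.1, p.2) ∈ S ∧ (p.1, -p.2) ∈ S

def Sym2 (S : Pos) : Prop := S.Nonempty ∧ Stair S ∧ SymXY S ∧
  ((∃ a : ℤ, (a, (0:ℤ)) ∈ S) ↔ (∃ b : ℤ, ((0:ℤ), b) ∈ S)) ∧
  (∃ p ∈ S, p.2 ≠ 0) ∧ (∃ p ∈ S, p.1 ≠ 0)

def Row2 (S : Pos) : Prop := ∃ r1 r2 : ℤ, r1 ≠ r2 ∧
  (∀ p ∈ S, p.2 = r1 ∨ p.2 = r2) ∧ (∃ a : ℤ, (a, r1) ∈ S) ∧ (∃ a : ℤ, (a, r2) ∈ S) ∧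
  (∀ a : ℤ, (a, r2) ∈ S → (a, r1) ∈ S) ∧ Even (S.filter (fun p => p.2 = r1)).card

def sw (S : Pos) : Pos := S.image (fun p => (p.2, p.1))

lemma odd_card_symmRow {S : Pos} {r : ℤ} (hsym : ∀ p ∈ S, ((-p.1 : ℤ), p.2) ∈ S)
    (h0 : ((0:ℤ), r) ∈ S) : Odd ((S.filter (fun p => p.2 = r)).card) := by
  classical
  set X := S.filter (fun p => p.2 = r) with hX
  have h0X : ((0:ℤ), r) ∈ X := Finset.mem_filter.mpr ⟨h0, rfl⟩
  have hXsym : ∀ p ∈ X, ((-p.1 : ℤ), p.2) ∈ X := by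
    intro p hp
    obtain ⟨hpS, hpr⟩ := Finset.mem_filter.mp hp
    exact Finset.mem_filter.mpr ⟨hsym p hpS, hpr⟩
  have hsplit : (X.filter (fun p => p.1 = 0)).card + (X.filter (fun p => ¬ p.1 = 0)).card = X.card :=
    Finset.card_filter_add_card_filter_not _
  have hz : X.filter (fun p => p.1 = 0) = {((0:ℤ), r)} := by
    ext ⟨x, y⟩
    simp only [Finset.mem_filter, Finset.mem_singleton, Prod.mk.injEq, hX]
    constructor
    · rintro ⟨⟨-, hy⟩, hx⟩; exact ⟨hx, hy⟩
    · rintro ⟨hx, hy⟩; subst hx; subst hy; exact ⟨Finset.mem_filter.mp h0X, rfl⟩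
  set Y := X.filter (fun p => ¬ p.1 = 0) with hY
  have hsplit2 : (Y.filter (fun p => 0 < p.1)).card + (Y.filter (fun p => ¬ 0 < p.1)).card = Y.card :=
    Finset.card_filter_add_card_filter_not _
  have hbij : (Y.filter (fun p => 0 < p.1)).card = (Y.filter (fun p => ¬ 0 < p.1)).card := by
    apply Finset.card_bij (fun p _ => ((-p.1 : ℤ), p.2))
    · intro p hp
      obtain ⟨hpY, hppos⟩ := Finset.mem_filter.mp hp
      obtain ⟨hpX, hpne⟩ := Finset.mem_filter.mp hpY
      refine Finset.mem_filter.mpr ⟨Finset.mem_filter.mpr ⟨hXsym p hpX, by simpa using hpne⟩, by omega⟩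
    · intro p hp q hq he
      simp only [Prod.mk.injEq] at he
      obtain ⟨x, y⟩ := p; obtain ⟨u, v⟩ := q
      simp only at he
      simp only [Prod.mk.injEq]
      omega
    · intro q hq
      obtain ⟨hqY, hqpos⟩ := Finset.mem_filter.mp hq
      obtain ⟨hqX, hqne⟩ := Finset.mem_filter.mp hqY
      refine ⟨((-q.1 : ℤ), q.2), Finset.mem_filter.mpr ⟨Finset.mem_filter.mpr ⟨hXsym q hqX, by simpa using hqne⟩, by omega⟩, by simp⟩
  have hzcard : (X.filter (fun p => p.1 = 0)).card = 1 := by rw [hz]; simp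
  rw [Nat.odd_iff]
  omega

lemma mem_sw {S : Pos} {p : ℤ × ℤ} : p ∈ sw S ↔ (p.2, p.1) ∈ S := by
  obtain ⟨x, y⟩ := p
  constructor
  · intro h
    obtain ⟨⟨u, v⟩, hq, he⟩ := Finset.mem_image.mp h
    simp only [Prod.mk.injEq] at he
    obtain ⟨h1, h2⟩ := he
    subst h1; subst h2; exact hq
  · intro h
    exact Finset.mem_image.mpr ⟨(y, x), h, rfl⟩

lemma sw_sw (S : Pos) : sw (sw S) = S := by
  ext ⟨x, y⟩; simp [mem_sw]

def Phi (S : Pos) : Prop := S = ∅ ∨ Sym2 S ∨ Row2 S ∨ Row2 (sw S)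

lemma sym2_sw {S : Pos} (h : Sym2 S) : Sym2 (sw S) := by
  obtain ⟨⟨w, hw⟩, hst, hsy, hbal, ⟨p2, hp2, h2⟩, ⟨p1, hp1, h1⟩⟩ := h
  refine ⟨⟨(w.2, w.1), mem_sw.mpr (by simpa using hw)⟩, ?_, ?_, ?_, ?_, ?_⟩
  · intro p hp q hq
    have hp' := mem_sw.mp hp
    have hq' := mem_sw.mp hq
    constructor
    · intro hle
      exact mem_sw.mpr ((hst _ hp' _ hq').2 hle)
    · intro hle
      exact mem_sw.mpr ((hst _ hp' _ hq').1 hle)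
  · intro p hp
    have hp' := mem_sw.mp hp
    exact ⟨mem_sw.mpr (by simpa using (hsy _ hp').2), mem_sw.mpr (by simpa using (hsy _ hp').1)⟩
  · constructor
    · rintro ⟨a, ha⟩
      obtain ⟨a', ha'⟩ := hbal.mpr ⟨a, mem_sw.mp ha⟩
      exact ⟨a', mem_sw.mpr (by simpa using ha')⟩
    · rintro ⟨b, hb⟩
      obtain ⟨b', hb'⟩ := hbal.mp ⟨b, mem_sw.mp hb⟩
      exact ⟨b', mem_sw.mpr (by simpa using hb')⟩
  · exact ⟨(p1.2, p1.1), mem_sw.mpr (by simpa using hp1), h1⟩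
  · exact ⟨(p2.2, p2.1), mem_sw.mpr (by simpa using hp2), h2⟩

lemma phi_sw {S : Pos} (h : Phi S) : Phi (sw S) := by
  rcases h with h | h | h | h
  · left; subst h; ext ⟨x, y⟩; simp [mem_sw]
  · right; left; exact sym2_sw h
  · right; right; right; rwa [sw_sw]
  · right; right; left; exact h

lemma sym2_row (S : Pos) (h : Sym2 S) (r : ℤ) (hr : ∃ p ∈ S, p.2 = r) :
    ∃ T', DiamondMove (S.filter (fun p => p.2 ≠ r)) T' ∧ Phi T' := by
  classical
  obtain ⟨hne, hst, hsy, hbal, ⟨p2, hp2S, hp2⟩, ⟨p1, hp1S, hp1⟩⟩ := h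
  obtain ⟨pr, hprS, hpr2⟩ := hr
  have hprS' : (pr.1, r) ∈ S := by rw [← hpr2]; simpa using hprS
  by_cases hr0 : r = 0
  · subst hr0
    obtain ⟨b₀, hb₀⟩ := hbal.mp ⟨pr.1, hprS'⟩
    have h0p2 : ((0:ℤ), p2.2) ∈ S := by
      have h := (hst p2 hp2S (0, b₀) hb₀).1 (by simpa using abs_nonneg p2.1)
      simpa using h
    refine ⟨(S.filter (fun p => p.2 ≠ (0:ℤ))).filter (fun p => p.1 ≠ (0:ℤ)),
      Or.inr ⟨0, ⟨(0, p2.2), Finset.mem_filter.mpr ⟨h0p2, hp2⟩, rfl⟩, rfl⟩, ?_⟩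
    by_cases hTe : (S.filter (fun p => p.2 ≠ (0:ℤ))).filter (fun p => p.1 ≠ (0:ℤ)) = ∅
    · left; exact hTe
    · right; left
      have hmem : ∀ {p : ℤ × ℤ}, p ∈ (S.filter (fun p => p.2 ≠ (0:ℤ))).filter (fun p => p.1 ≠ (0:ℤ)) ↔ p ∈ S ∧ p.2 ≠ 0 ∧ p.1 ≠ 0 := by
      
        intro p; simp [Finset.mem_filter, and_assoc]
      obtain ⟨w, hw⟩ := Finset.nonempty_iff_ne_empty.mpr hTe
      obtain ⟨hwS, hw2, hw1⟩ := hmem.mp hw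
      refine ⟨⟨w, hw⟩, ?_, ?_, ?_, ⟨w, hw, hw2⟩, ⟨w, hw, hw1⟩⟩
      · intro p hp q hq
        obtain ⟨hpS, hp2', hp1'⟩ := hmem.mp hp
        obtain ⟨hqS, hq2', hq1'⟩ := hmem.mp hq
        exact ⟨fun hle => hmem.mpr ⟨(hst p hpS q hqS).1 hle, hp2', hq1'⟩,
               fun hle => hmem.mpr ⟨(hst p hpS q hqS).2 hle, hq2', hp1'⟩⟩
      · intro p hp
        obtain ⟨hpS, hp2', hp1'⟩ := hmem.mp hp
        exact ⟨hmem.mpr ⟨(hsy p hpS).1, hp2', by simpa using hp1'⟩,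
               hmem.mpr ⟨(hsy p hpS).2, by simpa using hp2', hp1'⟩⟩
      · constructor
        · rintro ⟨a, ha⟩; exact absurd rfl (hmem.mp ha).2.1
        · rintro ⟨b, hb⟩; exact absurd rfl (hmem.mp hb).2.2
  · have hmrr : (-r) ≠ r := by omega
    have hsymr : (pr.1, -r) ∈ S := by
      have h := (hsy pr hprS).2; rw [hpr2] at h; exact h
    by_cases hA : ∃ q ∈ S, q.2 ≠ 0 ∧ q.2 ≠ r ∧ q.2 ≠ -r
    · obtain ⟨q, hqS, hq0, hqr, hqmr⟩ := hA
      refine ⟨(S.filter (fun p => p.2 ≠ r)).filter (fun p => p.2 ≠ (-r)),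
        Or.inl ⟨-r, ⟨(pr.1, -r), Finset.mem_filter.mpr ⟨hsymr, hmrr⟩, rfl⟩, rfl⟩, ?_⟩
      right; left
      have hmem : ∀ {p : ℤ × ℤ}, p ∈ (S.filter (fun p => p.2 ≠ r)).filter (fun p => p.2 ≠ (-r)) ↔ p ∈ S ∧ p.2 ≠ r ∧ p.2 ≠ -r := by
        intro p; simp [Finset.mem_filter, and_assoc]
      have hqT : q ∈ (S.filter (fun p => p.2 ≠ r)).filter (fun p => p.2 ≠ (-r)) := hmem.mpr ⟨hqS, hqr, hqmr⟩
      refine ⟨⟨q, hqT⟩, ?_, ?_, ?_, ⟨q, hqT, hq0⟩, ?_⟩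
      · intro p hp q' hq'
        obtain ⟨hpS, hpa, hpb⟩ := hmem.mp hp
        obtain ⟨hq'S, hq'a, hq'b⟩ := hmem.mp hq'
        exact ⟨fun hle => hmem.mpr ⟨(hst p hpS q' hq'S).1 hle, hpa, hpb⟩,
               fun hle => hmem.mpr ⟨(hst p hpS q' hq'S).2 hle, hq'a, hq'b⟩⟩
      · intro p hp
        obtain ⟨hpS, hpa, hpb⟩ := hmem.mp hp
        exact ⟨hmem.mpr ⟨(hsy p hpS).1, hpa, hpb⟩,
               hmem.mpr ⟨(hsy p hpS).2, by omega, by omega⟩⟩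
      · constructor
        · rintro ⟨a, ha⟩
          obtain ⟨haS, -, -⟩ := hmem.mp ha
          obtain ⟨b₀, hb₀⟩ := hbal.mp ⟨a, haS⟩
          have h0q : ((0:ℤ), q.2) ∈ S := by
            have h := (hst q hqS (0, b₀) hb₀).1 (by simpa using abs_nonneg q.1)
            simpa using h
          exact ⟨q.2, hmem.mpr ⟨h0q, hqr, hqmr⟩⟩
        · rintro ⟨b, hb⟩
          obtain ⟨hbS, -, -⟩ := hmem.mp hb
          obtain ⟨a₀, ha₀⟩ := hbal.mpr ⟨b, hbS⟩
          exact ⟨a₀, hmem.mpr ⟨ha₀, by omega, by omega⟩⟩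
      · by_cases hcol : ∃ b : ℤ, ((0:ℤ), b) ∈ S
        · obtain ⟨a₀, ha₀⟩ := hbal.mpr hcol
          have hp10 : (p1.1, (0:ℤ)) ∈ S := by
            have h := (hst p1 hp1S (a₀, 0) ha₀).2 (by simpa using abs_nonneg p1.2)
            simpa using h
          exact ⟨(p1.1, 0), hmem.mpr ⟨hp10, by omega, by omega⟩, hp1⟩
        · refine ⟨q, hqT, fun hq1 => hcol ⟨q.2, ?_⟩⟩
          rw [← hq1]; simpa using hqS
    · push_neg at hA
      have hB : ∀ p ∈ S, p.2 = 0 ∨ p.2 = r ∨ p.2 = -r := by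
        intro p hp
        by_cases h1 : p.2 = 0
        · exact Or.inl h1
        by_cases h2 : p.2 = r
        · exact Or.inr (Or.inl h2)
        · exact Or.inr (Or.inr (hA p hp h1 h2))
      by_cases hrow0 : ∃ a : ℤ, (a, (0:ℤ)) ∈ S
      · obtain ⟨x₀, hx₀⟩ := hrow0
        obtain ⟨b₀, hb₀⟩ := hbal.mp ⟨x₀, hx₀⟩
        have h00 : ((0:ℤ), (0:ℤ)) ∈ S := by
          have h := (hst (0, b₀) hb₀ (x₀, 0) hx₀).2 (by simpa using abs_nonneg b₀)
          simpa using h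
        have h0r : ((0:ℤ), r) ∈ S := by
          have h := (hst pr hprS (0, 0) h00).1 (by simpa using abs_nonneg pr.1)
          rw [hpr2] at h
          simpa using h
        have h0mr : ((0:ℤ), -r) ∈ S := by
          have h := (hsy (0, r) h0r).2; simpa using h
        have hnest : ∀ x : ℤ, (x, -r) ∈ S → (x, (0:ℤ)) ∈ S := by
          intro x hx
          have h := (hst (x, -r) hx (0, 0) h00).2 (by simpa using abs_nonneg (-r))
          simpa using h
        have hoddt : Odd ((S.filter (fun p => p.2 = (0:ℤ))).card) :=
          odd_card_symmRow (fun p hp => (hsy p hp).1) h00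
        by_cases hout : ∃ x : ℤ, (x, (0:ℤ)) ∈ S ∧ (x, r) ∉ S
        · obtain ⟨ax, hax0, haxr⟩ := hout
          have haxne : ax ≠ 0 := fun hh => haxr (hh ▸ h0r)
          refine ⟨(S.filter (fun p => p.2 ≠ r)).filter (fun p => p.1 ≠ ax),
            Or.inr ⟨ax, ⟨(ax, 0), Finset.mem_filter.mpr ⟨hax0, by omega⟩, rfl⟩, rfl⟩, ?_⟩
          right; right; left
          have hmem : ∀ {p : ℤ × ℤ}, p ∈ (S.filter (fun p => p.2 ≠ r)).filter (fun p => p.1 ≠ ax) ↔ p ∈ S ∧ p.2 ≠ r ∧ p.1 ≠ ax := by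
            intro p; simp [Finset.mem_filter, and_assoc]
          refine ⟨0, -r, by omega, ?_, ⟨0, hmem.mpr ⟨h00, by omega, by omega⟩⟩,
            ⟨0, hmem.mpr ⟨h0mr, by omega, by omega⟩⟩, ?_, ?_⟩
          · intro p hp
            obtain ⟨hpS, hpr', -⟩ := hmem.mp hp
            rcases hB p hpS with hh | hh | hh
            · exact Or.inl hh
            · exact absurd hh hpr'
            · exact Or.inr hh
          · intro a ha
            obtain ⟨haS, -, hax⟩ := hmem.mp ha
            exact hmem.mpr ⟨hnest a haS, by omega, hax⟩
          · have hid : ((S.filter (fun p => p.2 ≠ r)).filter (fun p => p.1 ≠ ax)).filter (fun p => p.2 = (0:ℤ)) = (S.filter (fun p => p.2 = (0:ℤ))).erase (ax, 0) := by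
              ext ⟨x, y⟩
              simp only [Finset.mem_filter, Finset.mem_erase, Prod.mk.injEq, ne_eq]
              constructor
              · rintro ⟨⟨⟨hS, -⟩, hx⟩, hy⟩
                exact ⟨by tauto, hS, hy⟩
              · rintro ⟨hne', hS, hy⟩
                refine ⟨⟨⟨hS, by omega⟩, fun hxa => hne' ⟨hxa, hy⟩⟩, hy⟩
            have hmemX : ((ax, (0:ℤ)) : ℤ × ℤ) ∈ S.filter (fun p => p.2 = (0:ℤ)) :=
              Finset.mem_filter.mpr ⟨hax0, rfl⟩
            rw [hid, Finset.card_erase_of_mem hmemX]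
            rw [Nat.even_iff]; rw [Nat.odd_iff] at hoddt; omega
        · push_neg at hout
          refine ⟨(S.filter (fun p => p.2 ≠ r)).filter (fun p => p.1 ≠ (0:ℤ)),
            Or.inr ⟨0, ⟨(0, -r), Finset.mem_filter.mpr ⟨h0mr, by omega⟩, rfl⟩, rfl⟩, ?_⟩
          by_cases hTe : (S.filter (fun p => p.2 ≠ r)).filter (fun p => p.1 ≠ (0:ℤ)) = ∅
          · left; exact hTe
          right; right; left
          have hmem : ∀ {p : ℤ × ℤ}, p ∈ (S.filter (fun p => p.2 ≠ r)).filter (fun p => p.1 ≠ (0:ℤ)) ↔ p ∈ S ∧ p.2 ≠ r ∧ p.1 ≠ 0 := by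
            intro p; simp [Finset.mem_filter, and_assoc]
          obtain ⟨w, hw⟩ := Finset.nonempty_iff_ne_empty.mpr hTe
          obtain ⟨hwS, hwr, hw1⟩ := hmem.mp hw
          have key : ∀ x : ℤ, x ≠ 0 → (x, (0:ℤ)) ∈ S →
              ((x, (0:ℤ)) ∈ (S.filter (fun p => p.2 ≠ r)).filter (fun p => p.1 ≠ (0:ℤ)) ∧
               (x, -r) ∈ (S.filter (fun p => p.2 ≠ r)).filter (fun p => p.1 ≠ (0:ℤ))) := by
            intro x hx h0x
            have hxr : (x, r) ∈ S := hout x h0x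
            have hxmr : (x, -r) ∈ S := by have h := (hsy (x, r) hxr).2; simpa using h
            exact ⟨hmem.mpr ⟨h0x, by omega, hx⟩, hmem.mpr ⟨hxmr, by omega, hx⟩⟩
          have hw0 : (w.1, (0:ℤ)) ∈ S := by
            rcases hB w hwS with hh | hh | hh
            · rw [← hh]; simpa using hwS
            · exact absurd hh hwr
            · exact hnest w.1 (by rw [← hh]; simpa using hwS)
          obtain ⟨hw0T, hwmrT⟩ := key w.1 hw1 hw0
          refine ⟨0, -r, by omega, ?_, ⟨w.1, hw0T⟩, ⟨w.1, hwmrT⟩, ?_, ?_⟩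
          · intro p hp
            obtain ⟨hpS, hpr', -⟩ := hmem.mp hp
            rcases hB p hpS with hh | hh | hh
            · exact Or.inl hh
            · exact absurd hh hpr'
            · exact Or.inr hh
          · intro a ha
            obtain ⟨haS, -, hax⟩ := hmem.mp ha
            exact hmem.mpr ⟨hnest a haS, by omega, hax⟩
          · have hid : ((S.filter (fun p => p.2 ≠ r)).filter (fun p => p.1 ≠ (0:ℤ))).filter (fun p => p.2 = (0:ℤ)) = (S.filter (fun p => p.2 = (0:ℤ))).erase (0, 0) := by
              ext ⟨x, y⟩
              simp only [Finset.mem_filter, Finset.mem_erase, Prod.mk.injEq, ne_eq]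
              constructor
              · rintro ⟨⟨⟨hS, -⟩, hx⟩, hy⟩
                exact ⟨by tauto, hS, hy⟩
              · rintro ⟨hne', hS, hy⟩
                refine ⟨⟨⟨hS, by omega⟩, fun hxa => hne' ⟨hxa, hy⟩⟩, hy⟩
            have hmemX : (((0:ℤ), (0:ℤ)) : ℤ × ℤ) ∈ S.filter (fun p => p.2 = (0:ℤ)) :=
              Finset.mem_filter.mpr ⟨h00, rfl⟩
            rw [hid, Finset.card_erase_of_mem hmemX]
            rw [Nat.even_iff]; rw [Nat.odd_iff] at hoddt; omega
      · refine ⟨(S.filter (fun p => p.2 ≠ r)).filter (fun p => p.2 ≠ (-r)),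
          Or.inl ⟨-r, ⟨(pr.1, -r), Finset.mem_filter.mpr ⟨hsymr, hmrr⟩, rfl⟩, rfl⟩, ?_⟩
        left
        apply Finset.eq_empty_iff_forall_notMem.mpr
        rintro ⟨x, y⟩ hp
        have hmem : (x, y) ∈ S ∧ (x, y).2 ≠ r ∧ (x, y).2 ≠ -r := by
          have h1 := Finset.mem_filter.mp hp
          exact ⟨(Finset.mem_filter.mp h1.1).1, (Finset.mem_filter.mp h1.1).2, h1.2⟩
        obtain ⟨hS, hyr, hymr⟩ := hmem
        rcases hB (x, y) hS with hh | hh | hh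
        · exact hrow0 ⟨x, by rw [← hh]; exact hS⟩
        · exact hyr hh
        · exact hymr hh

lemma row2_row (S : Pos) (h : Row2 S) (r : ℤ) (hr : ∃ p ∈ S, p.2 = r) :
    ∃ T', DiamondMove (S.filter (fun p => p.2 ≠ r)) T' ∧ Phi T' := by
  classical
  obtain ⟨r1, r2, h12, htok, ⟨a1, ha1⟩, ⟨a2, ha2⟩, hnest, heven⟩ := h
  obtain ⟨pr, hprS, hpr2⟩ := hr
  rcases htok pr hprS with hcase | hcase
  · have hrr : r = r1 := by omega
    subst hrr
    refine ⟨(S.filter (fun p => p.2 ≠ r)).filter (fun p => p.2 ≠ r2),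
      Or.inl ⟨r2, ⟨(a2, r2), Finset.mem_filter.mpr ⟨ha2, Ne.symm h12⟩, rfl⟩, rfl⟩, ?_⟩
    left
    apply Finset.eq_empty_iff_forall_notMem.mpr
    intro p hp
    obtain ⟨hp1, hp2⟩ := Finset.mem_filter.mp hp
    obtain ⟨hpS, hpa⟩ := Finset.mem_filter.mp hp1
    rcases htok p hpS with hh | hh
    · exact hpa hh
    · exact hp2 hh
  · have hrr : r = r2 := by omega
    subst hrr
    refine ⟨(S.filter (fun p => p.2 ≠ r)).filter (fun p => p.2 ≠ r1),
      Or.inl ⟨r1, ⟨(a1, r1), Finset.mem_filter.mpr ⟨ha1, h12⟩, rfl⟩, rfl⟩, ?_⟩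
    left
    apply Finset.eq_empty_iff_forall_notMem.mpr
    intro p hp
    obtain ⟨hp1, hp2⟩ := Finset.mem_filter.mp hp
    obtain ⟨hpS, hpa⟩ := Finset.mem_filter.mp hp1
    rcases htok p hpS with hh | hh
    · exact hp2 hh
    · exact hpa hh

lemma row2_col (S : Pos) (h : Row2 S) (a : ℤ) (ha : ∃ p ∈ S, p.1 = a) :
    ∃ T', DiamondMove (S.filter (fun p => p.1 ≠ a)) T' ∧ Phi T' := by
  classical
  obtain ⟨r1, r2, h12, htok, ⟨a1, ha1⟩, ⟨a2, ha2⟩, hnest, heven⟩ := h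
  obtain ⟨pa, hpaS, hpa1⟩ := ha
  have haR1 : (a, r1) ∈ S := by
    rcases htok pa hpaS with hh | hh
    · rw [← hpa1, ← hh]; simpa using hpaS
    · exact hnest a (by rw [← hpa1, ← hh]; simpa using hpaS)
  by_cases h2e : ∃ x : ℤ, (x, r2) ∈ S ∧ x ≠ a
  · obtain ⟨x₂, hx₂S, hx₂a⟩ := h2e
    have hx₂1 : (x₂, r1) ∈ S := hnest x₂ hx₂S
    by_cases hout : ∃ x : ℤ, ((x, r1) ∈ S ∧ x ≠ a) ∧ ¬((x, r2) ∈ S ∧ x ≠ a)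
    · obtain ⟨ax, ⟨hax1, haxa⟩, hax2⟩ := hout
      refine ⟨(S.filter (fun p => p.1 ≠ a)).filter (fun p => p.1 ≠ ax),
        Or.inr ⟨ax, ⟨(ax, r1), Finset.mem_filter.mpr ⟨hax1, haxa⟩, rfl⟩, rfl⟩, ?_⟩
      right; right; left
      have hmem : ∀ {p : ℤ × ℤ}, p ∈ (S.filter (fun p => p.1 ≠ a)).filter (fun p => p.1 ≠ ax) ↔ p ∈ S ∧ p.1 ≠ a ∧ p.1 ≠ ax := by
        intro p; simp [Finset.mem_filter, and_assoc]
      have hx₂ax : x₂ ≠ ax := fun hh => hax2 ⟨hh ▸ hx₂S, hh ▸ hx₂a⟩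
      refine ⟨r1, r2, h12, ?_, ⟨x₂, hmem.mpr ⟨hx₂1, hx₂a, hx₂ax⟩⟩,
        ⟨x₂, hmem.mpr ⟨hx₂S, hx₂a, hx₂ax⟩⟩, ?_, ?_⟩
      · intro p hp; exact htok p (hmem.mp hp).1
      · intro x hx
        obtain ⟨hxS, hxa, hxax⟩ := hmem.mp hx
        exact hmem.mpr ⟨hnest x hxS, hxa, hxax⟩
      · have hsp := Finset.card_filter_add_card_filter_not
          (s := S.filter (fun p => p.2 = r1)) (p := fun p => p.1 = a ∨ p.1 = ax)
        have hpairset : (S.filter (fun p => p.2 = r1)).filter (fun p => p.1 = a ∨ p.1 = ax) = {((a:ℤ), r1), (ax, r1)} := by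
          ext ⟨x, y⟩
          simp only [Finset.mem_filter, Finset.mem_insert, Finset.mem_singleton, Prod.mk.injEq]
          constructor
          · rintro ⟨⟨hS, hy⟩, hx | hx⟩
            · exact Or.inl ⟨hx, hy⟩
            · exact Or.inr ⟨hx, hy⟩
          · rintro (⟨hx, hy⟩ | ⟨hx, hy⟩) <;> subst hx <;> subst hy
            · exact ⟨⟨haR1, rfl⟩, Or.inl rfl⟩
            · exact ⟨⟨hax1, rfl⟩, Or.inr rfl⟩
        have hpaircard : ((S.filter (fun p => p.2 = r1)).filter (fun p => p.1 = a ∨ p.1 = ax)).card = 2 := by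
          rw [hpairset]
          rw [Finset.card_pair (by simp only [ne_eq, Prod.mk.injEq, and_true]; omega)]
        have htarget : ((S.filter (fun p => p.1 ≠ a)).filter (fun p => p.1 ≠ ax)).filter (fun p => p.2 = r1)
            = (S.filter (fun p => p.2 = r1)).filter (fun p => ¬(p.1 = a ∨ p.1 = ax)) := by
          ext ⟨x, y⟩
          simp only [Finset.mem_filter, ne_eq]
          tauto
        rw [htarget]
        rw [Nat.even_iff] at heven ⊢
        omega
    · push_neg at hout
      refine ⟨(S.filter (fun p => p.1 ≠ a)).filter (fun p => p.1 ≠ x₂),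
        Or.inr ⟨x₂, ⟨(x₂, r2), Finset.mem_filter.mpr ⟨hx₂S, hx₂a⟩, rfl⟩, rfl⟩, ?_⟩
      by_cases hTe : (S.filter (fun p => p.1 ≠ a)).filter (fun p => p.1 ≠ x₂) = ∅
      · left; exact hTe
      right; right; left
      have hmem : ∀ {p : ℤ × ℤ}, p ∈ (S.filter (fun p => p.1 ≠ a)).filter (fun p => p.1 ≠ x₂) ↔ p ∈ S ∧ p.1 ≠ a ∧ p.1 ≠ x₂ := by
        intro p; simp [Finset.mem_filter, and_assoc]
      obtain ⟨w, hw⟩ := Finset.nonempty_iff_ne_empty.mpr hTe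
      obtain ⟨hwS, hwa, hwx₂⟩ := hmem.mp hw
      have hw1 : (w.1, r1) ∈ S := by
        rcases htok w hwS with hh | hh
        · rw [← hh]; simpa using hwS
        · exact hnest w.1 (by rw [← hh]; simpa using hwS)
      have hw2 : (w.1, r2) ∈ S := (hout w.1 ⟨hw1, hwa⟩).1
      refine ⟨r1, r2, h12, ?_, ⟨w.1, hmem.mpr ⟨hw1, hwa, hwx₂⟩⟩,
        ⟨w.1, hmem.mpr ⟨hw2, hwa, hwx₂⟩⟩, ?_, ?_⟩
      · intro p hp; exact htok p (hmem.mp hp).1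
      · intro x hx
        obtain ⟨hxS, hxa, hxx⟩ := hmem.mp hx
        exact hmem.mpr ⟨hnest x hxS, hxa, hxx⟩
      · have hsp := Finset.card_filter_add_card_filter_not
          (s := S.filter (fun p => p.2 = r1)) (p := fun p => p.1 = a ∨ p.1 = x₂)
        have hpairset : (S.filter (fun p => p.2 = r1)).filter (fun p => p.1 = a ∨ p.1 = x₂) = {((a:ℤ), r1), (x₂, r1)} := by
          ext ⟨x, y⟩
          simp only [Finset.mem_filter, Finset.mem_insert, Finset.mem_singleton, Prod.mk.injEq]
          constructor
          · rintro ⟨⟨hS, hy⟩, hx | hx⟩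
            · exact Or.inl ⟨hx, hy⟩
            · exact Or.inr ⟨hx, hy⟩
          · rintro (⟨hx, hy⟩ | ⟨hx, hy⟩) <;> subst hx <;> subst hy
            · exact ⟨⟨haR1, rfl⟩, Or.inl rfl⟩
            · exact ⟨⟨hx₂1, rfl⟩, Or.inr rfl⟩
        have hpaircard : ((S.filter (fun p => p.2 = r1)).filter (fun p => p.1 = a ∨ p.1 = x₂)).card = 2 := by
          rw [hpairset]
          rw [Finset.card_pair (by simp only [ne_eq, Prod.mk.injEq, and_true]; omega)]
        have htarget : ((S.filter (fun p => p.1 ≠ a)).filter (fun p => p.1 ≠ x₂)).filter (fun p => p.2 = r1)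
            = (S.filter (fun p => p.2 = r1)).filter (fun p => ¬(p.1 = a ∨ p.1 = x₂)) := by
          ext ⟨x, y⟩
          simp only [Finset.mem_filter, ne_eq]
          tauto
        rw [htarget]
        rw [Nat.even_iff] at heven ⊢
        omega
  · push_neg at h2e
    have hcard2 : 1 < (S.filter (fun p => p.2 = r1)).card := by
      have hne0 : 0 < (S.filter (fun p => p.2 = r1)).card :=
        Finset.card_pos.mpr ⟨(a1, r1), Finset.mem_filter.mpr ⟨ha1, rfl⟩⟩
      rw [Nat.even_iff] at heven
      omega
    obtain ⟨p, hpX, q, hqX, hpq⟩ := Finset.one_lt_card.mp hcard2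
    have hp1q1 : p.1 ≠ q.1 := by
      intro hh
      apply hpq
      have e1 := (Finset.mem_filter.mp hpX).2
      have e2 := (Finset.mem_filter.mp hqX).2
      exact Prod.ext hh (by rw [e1, e2])
    obtain ⟨xw, hxwS, hxwa⟩ : ∃ x : ℤ, (x, r1) ∈ S ∧ x ≠ a := by
      by_cases hpa' : p.1 = a
      · refine ⟨q.1, ?_, by omega⟩
        have := (Finset.mem_filter.mp hqX)
        rw [← this.2]; simpa using this.1
      · refine ⟨p.1, ?_, hpa'⟩
        have := (Finset.mem_filter.mp hpX)
        rw [← this.2]; simpa using this.1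
    refine ⟨(S.filter (fun p => p.1 ≠ a)).filter (fun p => p.2 ≠ r1),
      Or.inl ⟨r1, ⟨(xw, r1), Finset.mem_filter.mpr ⟨hxwS, hxwa⟩, rfl⟩, rfl⟩, ?_⟩
    left
    apply Finset.eq_empty_iff_forall_notMem.mpr
    intro p' hp'
    obtain ⟨hp'1, hp'2⟩ := Finset.mem_filter.mp hp'
    obtain ⟨hp'S, hp'a⟩ := Finset.mem_filter.mp hp'1
    rcases htok p' hp'S with hh | hh
    · exact hp'2 hh
    · apply hp'a
      apply h2e p'.1
      rw [← hh]; simpa using hp'S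


lemma sw_filter_row (S : Pos) (r : ℤ) :
    sw (S.filter (fun p => p.2 ≠ r)) = (sw S).filter (fun p => p.1 ≠ r) := by
  ext ⟨x, y⟩
  simp [mem_sw, Finset.mem_filter]

lemma sw_filter_col (S : Pos) (a : ℤ) :
    sw (S.filter (fun p => p.1 ≠ a)) = (sw S).filter (fun p => p.2 ≠ a) := by
  ext ⟨x, y⟩
  simp [mem_sw, Finset.mem_filter]

lemma dmove_sw {S T : Pos} (h : DiamondMove S T) : DiamondMove (sw S) (sw T) := by
  rcases h with ⟨r, ⟨p, hp, hpr⟩, rfl⟩ | ⟨a, ⟨p, hp, hpa⟩, rfl⟩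
  · right
    exact ⟨r, ⟨(p.2, p.1), mem_sw.mpr (by simpa using hp), hpr⟩, sw_filter_row S r⟩
  · left
    exact ⟨a, ⟨(p.2, p.1), mem_sw.mpr (by simpa using hp), hpa⟩, sw_filter_col S a⟩

lemma rowMaster (S : Pos) (hPhi : Phi S) (r : ℤ) (hr : ∃ p ∈ S, p.2 = r) :
    ∃ T', DiamondMove (S.filter (fun p => p.2 ≠ r)) T' ∧ Phi T' := by
  rcases hPhi with he | hs | hrow | hcol
  · subst he; obtain ⟨p, hp, -⟩ := hr; simp at hp
  · exact sym2_row S hs r hr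
  · exact row2_row S hrow r hr
  · have hr' : ∃ p ∈ sw S, p.1 = r := by
      obtain ⟨p, hp, h2⟩ := hr
      exact ⟨(p.2, p.1), mem_sw.mpr (by simpa using hp), h2⟩
    obtain ⟨T'', hmv'', hphi''⟩ := row2_col (sw S) hcol r hr'
    refine ⟨sw T'', ?_, phi_sw hphi''⟩
    have h2 := dmove_sw hmv''
    have h1 : sw ((sw S).filter (fun p => p.1 ≠ r)) = S.filter (fun p => p.2 ≠ r) := by
      rw [← sw_filter_row, sw_sw]
    rwa [h1] at h2

lemma closure (S T : Pos) (hPhi : Phi S) (hmv : DiamondMove S T) :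
    ∃ T', DiamondMove T T' ∧ Phi T' := by
  rcases hmv with ⟨r, hr, rfl⟩ | ⟨a, ha, rfl⟩
  · exact rowMaster S hPhi r hr
  · have ha' : ∃ p ∈ sw S, p.2 = a := by
      obtain ⟨p, hp, h1⟩ := ha
      exact ⟨(p.2, p.1), mem_sw.mpr (by simpa using hp), h1⟩
    obtain ⟨T'', hmv'', hphi''⟩ := rowMaster (sw S) (phi_sw hPhi) a ha'
    refine ⟨sw T'', ?_, phi_sw hphi''⟩
    have h2 := dmove_sw hmv''
    have h1 : sw ((sw S).filter (fun p => p.2 ≠ a)) = S.filter (fun p => p.1 ≠ a) := by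
      rw [← sw_filter_col, sw_sw]
    rwa [h1] at h2

lemma phi_P : ∀ (n : ℕ) (S : Pos), S.card = n → Phi S → DiamondP S := by
  intro n
  induction n using Nat.strong_induction_on with
  | _ n ih =>
    intro S hcard hPhi
    show IsP Finset.card DiamondMove diamondMove_lt S
    rw [IsP]
    intro T hmv hPT
    obtain ⟨T', hmv', hphi'⟩ := closure S T hPhi hmv
    have h1 := diamondMove_lt hmv
    have h2 := diamondMove_lt hmv'
    have hP' : DiamondP T' := ih T'.card (by omega) T' rfl hphi'
    rw [IsP] at hPT
    exact hPT T' hmv' hP'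

end DiamondAux

/-- **Diamonds are P-positions.** For every integer `c ≥ 1`, the diamond
`D_c = {(a, b) ∈ ℤ × ℤ : |a| + |b| ≤ c}` is a P-position of the Diamond game
(the second player wins). -/
theorem diamond_Dc_P (c : ℤ) (hc : 1 ≤ c) (S : Finset (ℤ × ℤ))
    (hS : ∀ p : ℤ × ℤ, p ∈ S ↔ |p.1| + |p.2| ≤ c) :
    DiamondP S := by
  have hPhi : DiamondAux.Phi S := by
    right; left
    refine ⟨⟨((0:ℤ), (0:ℤ)), (hS _).mpr (show |(0:ℤ)| + |(0:ℤ)| ≤ c by simp; omega)⟩,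
      ?_, ?_, ?_, ?_, ?_⟩
    · intro p hp q hq
      have hp' := (hS p).mp hp
      have hq' := (hS q).mp hq
      constructor
      · intro hle
        exact (hS _).mpr (show |q.1| + |p.2| ≤ c by omega)
      · intro hle
        exact (hS _).mpr (show |p.1| + |q.2| ≤ c by omega)
    · intro p hp
      have hp' := (hS p).mp hp
      constructor
      · exact (hS _).mpr (show |(-p.1)| + |p.2| ≤ c by rw [abs_neg]; omega)
      · exact (hS _).mpr (show |p.1| + |(-p.2)| ≤ c by rw [abs_neg]; omega)
    · constructor
      · intro _
        exact ⟨0, (hS _).mpr (show |(0:ℤ)| + |(0:ℤ)| ≤ c by simp; omega)⟩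
      · intro _
        exact ⟨0, (hS _).mpr (show |(0:ℤ)| + |(0:ℤ)| ≤ c by simp; omega)⟩
    · exact ⟨((0:ℤ), (1:ℤ)), (hS _).mpr (show |(0:ℤ)| + |(1:ℤ)| ≤ c by simp; omega),
        one_ne_zero⟩
    · exact ⟨((1:ℤ), (0:ℤ)), (hS _).mpr (show |(1:ℤ)| + |(0:ℤ)| ≤ c by simp; omega),
        one_ne_zero⟩
  exact DiamondAux.phi_P S.card S rfl hPhi
end

section
/- Let m, n ≥ 1 and let S = {1, …, m} × {1, …, n} ⊆ ℤ × ℤ be an m-by-n rectangle of tokens. Then S is a P-position of the Diamond game if and only if m + n is even, m > 1, and n > 1. -/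
lemma diamondP_iff (S : Finset (ℤ × ℤ)) :
    DiamondP S ↔ ∀ T, DiamondMove S T → ¬ DiamondP T := by
  rw [DiamondP, IsP]

lemma move_from_grid (A B : Finset ℤ) (T : Finset (ℤ × ℤ)) :
    DiamondMove (A ×ˢ B) T ↔
      (∃ r ∈ B, A.Nonempty ∧ T = A ×ˢ (B.erase r)) ∨
      (∃ c ∈ A, B.Nonempty ∧ T = (A.erase c) ×ˢ B) := by
  constructor
  · rintro (⟨r, ⟨p, hp, hpr⟩, rfl⟩ | ⟨c, ⟨p, hp, hpc⟩, rfl⟩)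
    · rw [Finset.mem_product] at hp
      refine Or.inl ⟨r, hpr ▸ hp.2, ⟨p.1, hp.1⟩, ?_⟩
      ext q
      simp only [Finset.mem_filter, Finset.mem_product, Finset.mem_erase]
      tauto
    · rw [Finset.mem_product] at hp
      refine Or.inr ⟨c, hpc ▸ hp.1, ⟨p.2, hp.2⟩, ?_⟩
      ext q
      simp only [Finset.mem_filter, Finset.mem_product, Finset.mem_erase]
      tauto
  · rintro (⟨r, hr, ⟨a, ha⟩, rfl⟩ | ⟨c, hc, ⟨b, hb⟩, rfl⟩)
    · refine Or.inl ⟨r, ⟨(a, r), Finset.mem_product.mpr ⟨ha, hr⟩, rfl⟩, ?_⟩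
      ext q
      simp only [Finset.mem_filter, Finset.mem_product, Finset.mem_erase]
      tauto
    · refine Or.inr ⟨c, ⟨(c, b), Finset.mem_product.mpr ⟨hc, hb⟩, rfl⟩, ?_⟩
      ext q
      simp only [Finset.mem_filter, Finset.mem_product, Finset.mem_erase]
      tauto

lemma diamondP_empty : DiamondP (∅ : Finset (ℤ × ℤ)) := by
  rw [diamondP_iff]
  rintro T (⟨r, ⟨p, hp, _⟩, _⟩ | ⟨c, ⟨p, hp, _⟩, _⟩) <;> simp at hp

lemma grid_P : ∀ (N : ℕ) (A B : Finset ℤ), A.card + B.card = N →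
    (DiamondP (A ×ˢ B) ↔
      (A = ∅ ∨ B = ∅ ∨ (Even (A.card + B.card) ∧ 1 < A.card ∧ 1 < B.card))) := by
  intro N
  induction N using Nat.strong_induction_on with
  | _ N ih =>
    intro A B hN
    rcases eq_or_ne A ∅ with rfl | hA
    · simp [diamondP_empty]
    rcases eq_or_ne B ∅ with rfl | hB
    · simp [diamondP_empty]
    have hA1 : 1 ≤ A.card := Finset.card_pos.mpr (Finset.nonempty_iff_ne_empty.mpr hA)
    have hB1 : 1 ≤ B.card := Finset.card_pos.mpr (Finset.nonempty_iff_ne_empty.mpr hB)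
    simp only [hA, hB, false_or]
    -- helper for IH applications
    have ihr : ∀ r ∈ B, (DiamondP (A ×ˢ (B.erase r)) ↔
        (A = ∅ ∨ B.erase r = ∅ ∨ (Even (A.card + (B.card - 1)) ∧ 1 < A.card ∧ 1 < B.card - 1))) := by
      intro r hr
      have hc : (B.erase r).card = B.card - 1 := Finset.card_erase_of_mem hr
      rw [ih (A.card + (B.card - 1)) (by omega) A (B.erase r) (by omega), hc]
    have ihc : ∀ c ∈ A, (DiamondP ((A.erase c) ×ˢ B) ↔
        (A.erase c = ∅ ∨ B = ∅ ∨ (Even ((A.card - 1) + B.card) ∧ 1 < A.card - 1 ∧ 1 < B.card))) := by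
      intro c hc
      have hcc : (A.erase c).card = A.card - 1 := Finset.card_erase_of_mem hc
      rw [ih ((A.card - 1) + B.card) (by omega) (A.erase c) B (by omega), hcc]
    rw [Nat.even_iff]
    rcases Nat.lt_or_ge A.card 2 with hA2 | hA2
    · -- A.card = 1 : N-position
      have : A.card = 1 := by omega
      obtain ⟨a, ha⟩ := Finset.card_eq_one.mp this
      have key : ¬ DiamondP (A ×ˢ B) := by
        rw [diamondP_iff]
        push_neg
        refine ⟨(A.erase a) ×ˢ B, ?_, ?_⟩
        · exact (move_from_grid A B _).mpr (Or.inr ⟨a, by simp [ha],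
            Finset.nonempty_iff_ne_empty.mpr hB, rfl⟩)
        · have : A.erase a = ∅ := by simp [ha]
          rw [this]
          simpa using diamondP_empty
      simp [key]; omega
    rcases Nat.lt_or_ge B.card 2 with hB2 | hB2
    · have : B.card = 1 := by omega
      obtain ⟨b, hb⟩ := Finset.card_eq_one.mp this
      have key : ¬ DiamondP (A ×ˢ B) := by
        rw [diamondP_iff]
        push_neg
        refine ⟨A ×ˢ (B.erase b), ?_, ?_⟩
        · exact (move_from_grid A B _).mpr (Or.inl ⟨b, by simp [hb],
            Finset.nonempty_iff_ne_empty.mpr hA, rfl⟩)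
        · have : B.erase b = ∅ := by simp [hb]
          rw [this]
          simpa using diamondP_empty
      simp [key]; omega
    -- both ≥ 2
    rcases Nat.eq_zero_or_pos ((A.card + B.card) % 2) with hpar | hpar
    · -- even sum: P-position
      have key : DiamondP (A ×ˢ B) := by
        rw [diamondP_iff]
        intro T hT
        rcases (move_from_grid A B T).mp hT with ⟨r, hr, _, rfl⟩ | ⟨c, hc, _, rfl⟩
        · rw [ihr r hr]
          push_neg
          refine ⟨Finset.nonempty_iff_ne_empty.mpr hA, Finset.nonempty_iff_ne_empty.mpr fun h => absurd (Finset.card_eq_zero.mpr h) (by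
            rw [Finset.card_erase_of_mem hr]; omega), ?_⟩
          intro he
          rw [Nat.even_iff] at he
          omega
        · rw [ihc c hc]
          push_neg
          refine ⟨Finset.nonempty_iff_ne_empty.mpr fun h => absurd (Finset.card_eq_zero.mpr h) (by
            rw [Finset.card_erase_of_mem hc]; omega), Finset.nonempty_iff_ne_empty.mpr hB, ?_⟩
          intro he
          rw [Nat.even_iff] at he
          omega
      simp [key]; omega
    · -- odd sum: N-position
      have key : ¬ DiamondP (A ×ˢ B) := by
        rw [diamondP_iff]
        push_neg
        rcases Nat.lt_or_ge A.card 3 with hA3 | hA3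
        · -- A.card = 2, so B.card odd ≥ 3; remove a row
          obtain ⟨r, hr⟩ := Finset.nonempty_iff_ne_empty.mpr hB
          refine ⟨A ×ˢ (B.erase r), (move_from_grid A B _).mpr (Or.inl ⟨r, hr,
            Finset.nonempty_iff_ne_empty.mpr hA, rfl⟩), ?_⟩
          rw [ihr r hr]
          refine Or.inr (Or.inr ⟨?_, by omega, by omega⟩)
          rw [Nat.even_iff]; omega
        · obtain ⟨c, hc⟩ := Finset.nonempty_iff_ne_empty.mpr hA
          refine ⟨(A.erase c) ×ˢ B, (move_from_grid A B _).mpr (Or.inr ⟨c, hc,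
            Finset.nonempty_iff_ne_empty.mpr hB, rfl⟩), ?_⟩
          rw [ihc c hc]
          refine Or.inr (Or.inr ⟨?_, by omega, by omega⟩)
          rw [Nat.even_iff]; omega
      simp [key]; omega

/-- **Rectangle positions.** Let `m, n ≥ 1` and let `S = {1, …, m} × {1, …, n}` be
an `m`-by-`n` rectangle of tokens. Then `S` is a P-position of the Diamond game if
and only if `m + n` is even, `m > 1`, and `n > 1`. -/
theorem diamond_rectangle_P (m n : ℕ) (hm : 1 ≤ m) (hn : 1 ≤ n) :
    DiamondP ((Finset.Icc (1 : ℤ) (m : ℤ)) ×ˢ (Finset.Icc (1 : ℤ) (n : ℤ))) ↔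
      Even (m + n) ∧ 1 < m ∧ 1 < n := by
  have hcm : (Finset.Icc (1 : ℤ) (m : ℤ)).card = m := by
    rw [Int.card_Icc]; omega
  have hcn : (Finset.Icc (1 : ℤ) (n : ℤ)).card = n := by
    rw [Int.card_Icc]; omega
  have hne1 : Finset.Icc (1 : ℤ) (m : ℤ) ≠ ∅ := by
    apply Finset.nonempty_iff_ne_empty.mp
    exact ⟨1, by simp; omega⟩
  have hne2 : Finset.Icc (1 : ℤ) (n : ℤ) ≠ ∅ := by
    apply Finset.nonempty_iff_ne_empty.mp
    exact ⟨1, by simp; omega⟩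
  rw [grid_P _ _ _ rfl, hcm, hcn]
  simp [hne1, hne2]
end

section
/- In the Demon Money game, for every integer k ≥ 1, every N with k² + k − 1 ≤ N ≤ (k+1)² − 2 is an N-position, and every N with k² − 1 ≤ N ≤ k² + k − 2 is a P-position; moreover 0 is a P-position. These ranges cover all nonnegative integers. -/
/-- A legal move in the Demon Money game: from a pile of `p ≥ 1` coins, move to
`p - ⌊√p⌋` or to `p - ⌈√p⌉` (if `p` is a perfect square these coincide). -/
def DemonMove (p q : ℕ) : Prop :=
  1 ≤ p ∧ (q = p - Nat.sqrt p ∨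
    q = p - (if Nat.sqrt p * Nat.sqrt p = p then Nat.sqrt p else Nat.sqrt p + 1))

theorem demonMove_lt : ∀ ⦃p q : ℕ⦄, DemonMove p q → q < p := by
  rintro p q ⟨hp, hq | hq⟩ <;> subst hq <;>
    have hs : 0 < Nat.sqrt p := Nat.sqrt_pos.mpr hp
  · exact Nat.sub_lt hp hs
  · apply Nat.sub_lt hp
    split <;> omega

/-- P-positions of the Demon Money game. -/
def DemonP : ℕ → Prop := IsP id DemonMove demonMove_lt

lemma demonP_unfold (N : ℕ) :
    DemonP N ↔ ∀ t, DemonMove N t → ¬ DemonP t := by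
  rw [DemonP, IsP]

def Pred (N : ℕ) : Prop := ∃ k : ℕ, 1 ≤ k ∧ k * k - 1 ≤ N ∧ N ≤ k * k + k - 2

lemma sqrt_eq_of {a m : ℕ} (h1 : a * a ≤ m) (h2 : m < (a + 1) * (a + 1)) :
    Nat.sqrt m = a :=
  le_antisymm (Nat.lt_succ_iff.mp (Nat.sqrt_lt.mpr h2)) (Nat.le_sqrt.mpr h1)

lemma not_pred_N {q t : ℕ} (ht : 1 ≤ t) (h1 : t * t + t - 1 ≤ q)
    (h2 : q ≤ t * t + 2 * t - 1) : ¬ Pred q := by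
  rintro ⟨k, hk, h3, h4⟩
  have hT1 : t ≤ t * t := Nat.le_mul_of_pos_left t ht
  have hK1 : k ≤ k * k := Nat.le_mul_of_pos_left k hk
  rcases le_or_gt k t with h | h
  · have h5 : k * k ≤ t * t := Nat.mul_le_mul h h
    generalize hT : t * t = T at h1 h2 h5 hT1
    generalize hK : k * k = K at h3 h4 h5 hK1
    omega
  · have h5 : (t + 1) * (t + 1) ≤ k * k := Nat.mul_le_mul h h
    have E : (t + 1) * (t + 1) = t * t + 2 * t + 1 := by ring
    rw [E] at h5
    generalize hT : t * t = T at h1 h2 h5 hT1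
    generalize hK : k * k = K at h3 h4 h5 hK1
    omega

lemma demonP_iff (N : ℕ) : DemonP N ↔ Pred N := by
  induction N using Nat.strong_induction_on with
  | _ N ih =>
  rcases Nat.eq_zero_or_pos N with rfl | hN
  · constructor
    · intro _; exact ⟨1, le_refl 1, by norm_num, by norm_num⟩
    · intro _
      rw [demonP_unfold]
      rintro t ⟨h, _⟩ _
      omega
  · obtain ⟨s, hs⟩ : ∃ s, Nat.sqrt N = s := ⟨_, rfl⟩
    have hs1 : s * s ≤ N := hs ▸ Nat.sqrt_le N
    have hs2 : N < (s + 1) * (s + 1) := hs ▸ Nat.lt_succ_sqrt N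
    have hspos : 1 ≤ s := hs ▸ Nat.sqrt_pos.mpr hN
    obtain ⟨a, rfl⟩ : ∃ a, s = a + 1 := ⟨s - 1, by omega⟩
    have E1 : (a + 1) * (a + 1) = a * a + 2 * a + 1 := by ring
    have E2 : (a + 2) * (a + 2) = a * a + 4 * a + 4 := by ring
    rw [E1] at hs1
    rw [show (a + 1 + 1) = a + 2 from rfl, E2] at hs2
    -- so  a*a + 2*a + 1 ≤ N  and  N < a*a + 4*a + 4,  i.e. N ≤ a*a + 4*a + 3.
    by_cases hz1 : N ≤ a * a + 3 * a
    -- Zone P1 : a*a+2*a+1 ≤ N ≤ a*a+3*a  (forces a ≥ 1)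
    · have ha : 1 ≤ a := by
        generalize hA : a * a = A at hs1 hz1
        omega
      apply iff_of_true
      · rw [demonP_unfold]
        rintro t ⟨-, ht | ht⟩
        · rw [hs] at ht
          -- t = N - (a+1) ∈ [a*a + a, a*a + 2*a - 1]
          have hst : Nat.sqrt t = a := by
            apply sqrt_eq_of
            · generalize hA : a * a = A at hs1 ⊢
              omega
            · rw [E1]
              generalize hA : a * a = A at hz1 ⊢
              omega
          intro hP
          exact not_pred_N ha
            (by generalize hA : a * a = A at hs1 ⊢; omega)
            (by generalize hA : a * a = A at hz1 ⊢; omega)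
            ((ih t (by omega)).mp hP)
        · rw [hs] at ht
          split_ifs at ht with hsq
        -- square case: t = N - (a+1)
          · intro hP
            exact not_pred_N ha
              (by generalize hA : a * a = A at hs1 ⊢; omega)
              (by generalize hA : a * a = A at hz1 ⊢; omega)
              ((ih t (by omega)).mp hP)
          -- non-square case: t = N - (a+2); here N ≥ a*a+2*a+2
          · rw [E1] at hsq
            have hsq' : a * a + 2 * a + 2 ≤ N := by
              generalize hA : a * a = A at hs1 hsq ⊢
              omega
            intro hP
            exact not_pred_N ha
              (by generalize hA : a * a = A at hsq' ⊢; omega)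
              (by generalize hA : a * a = A at hz1 ⊢; omega)
              ((ih t (by omega)).mp hP)
      · exact ⟨a + 1, by omega, by rw [E1]; omega, by rw [E1]; omega⟩
    · by_cases hz2 : N ≤ a * a + 4 * a + 2
      -- N zone : a*a+3*a+1 ≤ N ≤ a*a+4*a+2
      · apply iff_of_false
        · rw [demonP_unfold]
          push_neg
          by_cases hz3 : N ≤ a * a + 4 * a + 1
          · refine ⟨N - (a + 1), ⟨hN, Or.inl (by rw [hs])⟩, ?_⟩
            rw [ih _ (by omega)]
            exact ⟨a + 1, by omega,
              by rw [E1]; generalize hA : a * a = A at hz1 ⊢; omega,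
              by rw [E1]; generalize hA : a * a = A at hz3 ⊢; omega⟩
          · -- N = a*a + 4*a + 2, not a square; move to N - (a+2)
            have hNe : N = a * a + 4 * a + 2 := by
              generalize hA : a * a = A at hs2 hz3 ⊢
              omega
            have hnsq : ¬ (Nat.sqrt N * Nat.sqrt N = N) := by
              rw [hs, E1]
              generalize hA : a * a = A at hNe ⊢
              omega
            refine ⟨N - (a + 2), ⟨hN, Or.inr ?_⟩, ?_⟩
            · rw [if_neg hnsq, hs]
            · rw [ih _ (by omega)]
              exact ⟨a + 1, by omega,
                by rw [E1]; generalize hA : a * a = A at hNe ⊢; omega,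
                by rw [E1]; generalize hA : a * a = A at hNe ⊢; omega⟩
        · apply not_pred_N hspos
          · rw [E1]; generalize hA : a * a = A at hz1 ⊢; omega
          · rw [E1]; generalize hA : a * a = A at hz2 ⊢; omega
      -- Zone P2 : N = a*a + 4*a + 3 = (a+2)^2 - 1
      · have hNe : N = a * a + 4 * a + 3 := by
          generalize hA : a * a = A at hs2 hz2 ⊢
          omega
        have hnsq : ¬ (Nat.sqrt N * Nat.sqrt N = N) := by
          rw [hs, E1]
          generalize hA : a * a = A at hNe ⊢
          omega
        apply iff_of_true
        · rw [demonP_unfold]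
          rintro t ⟨-, ht | ht⟩ <;>
            [skip; rw [if_neg hnsq] at ht] <;> rw [hs] at ht <;>
          · have hst : Nat.sqrt t = a + 1 := by
              apply sqrt_eq_of
              · rw [E1]; generalize hA : a * a = A at hNe ⊢; omega
              · rw [show (a + 1 + 1) = a + 2 from rfl, E2]
                generalize hA : a * a = A at hNe ⊢; omega
            intro hP
            refine not_pred_N (t := a + 1) (by omega) ?_ ?_
              ((ih t (by omega)).mp hP) <;>
            · rw [E1]; generalize hA : a * a = A at hNe ⊢; omega
        · exact ⟨a + 2, by omega, by rw [E2]; omega, by rw [E2]; omega⟩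


/-- **Demon Money P- and N-positions.** `0` is a P-position; for every integer
`k ≥ 1`, every `N` with `k² + k - 1 ≤ N ≤ (k+1)² - 2` is an N-position and every
`N` with `k² - 1 ≤ N ≤ k² + k - 2` is a P-position; moreover these ranges cover
all nonnegative integers. -/
theorem demon_money_positions :
    DemonP 0 ∧
    (∀ k : ℕ, 1 ≤ k → ∀ N : ℕ,
      (k ^ 2 + k - 1 ≤ N → N ≤ (k + 1) ^ 2 - 2 → ¬ DemonP N) ∧
      (k ^ 2 - 1 ≤ N → N ≤ k ^ 2 + k - 2 → DemonP N)) ∧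
    (∀ N : ℕ, ∃ k : ℕ, 1 ≤ k ∧
      ((k ^ 2 + k - 1 ≤ N ∧ N ≤ (k + 1) ^ 2 - 2) ∨
       (k ^ 2 - 1 ≤ N ∧ N ≤ k ^ 2 + k - 2))) := by
  refine ⟨(demonP_iff 0).mpr ⟨1, le_refl 1, by norm_num, by norm_num⟩, ?_, ?_⟩
  · intro k hk N
    have Ek : k ^ 2 = k * k := by ring
    have Ek1 : (k + 1) ^ 2 = k * k + 2 * k + 1 := by ring
    constructor
    · intro h1 h2 hP
      rw [Ek] at h1
      rw [Ek1] at h2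
      exact not_pred_N hk (by generalize hA : k * k = A at h1 ⊢; omega)
        (by generalize hA : k * k = A at h2 ⊢; omega) ((demonP_iff N).mp hP)
    · intro h1 h2
      rw [Ek] at h1 h2
      exact (demonP_iff N).mpr ⟨k, hk, h1, h2⟩
  · intro N
    rcases Nat.eq_zero_or_pos N with rfl | hN
    · exact ⟨1, le_refl 1, Or.inr ⟨by norm_num, by norm_num⟩⟩
    · obtain ⟨s, hs⟩ : ∃ s, Nat.sqrt N = s := ⟨_, rfl⟩
      have hs1 : s * s ≤ N := hs ▸ Nat.sqrt_le N
      have hs2 : N < (s + 1) * (s + 1) := hs ▸ Nat.lt_succ_sqrt N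
      have hspos : 1 ≤ s := hs ▸ Nat.sqrt_pos.mpr hN
      have E1 : (s + 1) * (s + 1) = s * s + 2 * s + 1 := by ring
      rw [E1] at hs2
      by_cases hz1 : N ≤ s * s + s - 2
      · refine ⟨s, hspos, Or.inr ⟨?_, ?_⟩⟩ <;>
        · rw [show s ^ 2 = s * s from by ring]
          generalize hA : s * s = A at hs1 hz1 ⊢
          omega
      · by_cases hz2 : N ≤ s * s + 2 * s - 1
        · refine ⟨s, hspos, Or.inl ⟨?_, ?_⟩⟩
          · rw [show s ^ 2 = s * s from by ring]
            generalize hA : s * s = A at hs1 hz1 ⊢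
            omega
          · rw [show (s + 1) ^ 2 = s * s + 2 * s + 1 from by ring]
            generalize hA : s * s = A at hz2 ⊢
            omega
        · refine ⟨s + 1, by omega, Or.inr ⟨?_, ?_⟩⟩ <;>
          · rw [show (s + 1) ^ 2 = s * s + 2 * s + 1 from by ring]
            generalize hA : s * s = A at hs2 hz2 ⊢
            omega
end

section
/- Let G : ℕ → ℕ be defined by G(0) = G(1) = 0 and, for n ≥ 2, G(n) = mex({G(i) XOR G(n−i−2) : 0 ≤ i ≤ n−2} ∪ {G(j) XOR 1 XOR G(n−j−1) : 0 ≤ j ≤ n−1}), where XOR is bitwise addition of natural numbers and mex(T) is the least nonnegative integer not in T. Then for every n ≥ 83, G(n) = G(n−12). -/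
/-- `mex T` is the least nonnegative integer not in `T`. -/
noncomputable def mex (T : Finset ℕ) : ℕ := sInf {n : ℕ | n ∉ T}

/-- Grundy numbers of the Remove-a-Square game on a 2-by-`n` rectangle:
`G 0 = G 1 = 0`, and for `n ≥ 2`,
`G n = mex ({G i XOR G (n-i-2) : 0 ≤ i ≤ n-2} ∪ {G j XOR 1 XOR G (n-j-1) : 0 ≤ j ≤ n-1})`. -/
noncomputable def G : ℕ → ℕ
  | 0 => 0
  | 1 => 0
  | n + 2 =>
      mex
        (((Finset.range (n + 1)).attach.image
            (fun i => G i.1 ^^^ G (n - i.1))) ∪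
         ((Finset.range (n + 2)).attach.image
            (fun j => G j.1 ^^^ 1 ^^^ G (n + 1 - j.1))))
decreasing_by
  · have := Finset.mem_range.mp i.2; omega
  · omega
  · have := Finset.mem_range.mp j.2; omega
  · omega

/-- Table of the first 168 Grundy values, 4 bits each. -/
def t (n : ℕ) : ℕ := (8764770797136199947909600126712373343012753052756714401760943333669253587088410010218124063266515641461327602835855310029662408645581369836397275180937546319143813052087726391320559600278182595064308224 >>> (4 * n)) &&& 15

lemma mex_eq {T : Finset ℕ} {m : ℕ} (h1 : m ∉ T) (h2 : ∀ k < m, k ∈ T) :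
    mex T = m := by
  unfold mex
  apply le_antisymm
  · exact Nat.sInf_le h1
  · by_contra h
    push_neg at h
    have hm : sInf {n : ℕ | n ∉ T} ∈ {n : ℕ | n ∉ T} := Nat.sInf_mem ⟨m, h1⟩
    exact hm (h2 _ h)

lemma mex_congr {S S' : Finset ℕ} (h : ∀ v, v ∈ S ↔ v ∈ S') : mex S = mex S' := by
  unfold mex
  congr 1
  ext v
  simp only [Set.mem_setOf_eq, h v]

lemma G_succ (n : ℕ) :
    G (n + 2) =
      mex
        (((Finset.range (n + 1)).attach.image
            (fun i => G i.1 ^^^ G (n - i.1))) ∪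
         ((Finset.range (n + 2)).attach.image
            (fun j => G j.1 ^^^ 1 ^^^ G (n + 1 - j.1)))) := by
  rw [G]

lemma mem_opt (n v : ℕ) :
    (v ∈ (((Finset.range (n + 1)).attach.image
            (fun i => G i.1 ^^^ G (n - i.1))) ∪
         ((Finset.range (n + 2)).attach.image
            (fun j => G j.1 ^^^ 1 ^^^ G (n + 1 - j.1))))) ↔
    ((∃ i ≤ n, v = G i ^^^ G (n - i)) ∨
     (∃ j ≤ n + 1, v = G j ^^^ 1 ^^^ G (n + 1 - j))) := by
  simp only [Finset.mem_union, Finset.mem_image, Finset.mem_attach, true_and,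
    Subtype.exists, Finset.mem_range, exists_prop]
  constructor
  · rintro (⟨i, hi, h⟩ | ⟨j, hj, h⟩)
    · exact Or.inl ⟨i, by omega, h.symm⟩
    · exact Or.inr ⟨j, by omega, h.symm⟩
  · rintro (⟨i, hi, h⟩ | ⟨j, hj, h⟩)
    · exact Or.inl ⟨i, by omega, h.symm⟩
    · exact Or.inr ⟨j, by omega, h.symm⟩

lemma G_eq_of (n m : ℕ)
    (h1 : ∀ k < m, (∃ i ≤ n, k = G i ^^^ G (n - i)) ∨
        (∃ j ≤ n + 1, k = G j ^^^ 1 ^^^ G (n + 1 - j)))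
    (h2 : ∀ i ≤ n, G i ^^^ G (n - i) ≠ m)
    (h3 : ∀ j ≤ n + 1, G j ^^^ 1 ^^^ G (n + 1 - j) ≠ m) :
    G (n + 2) = m := by
  rw [G_succ]
  apply mex_eq
  · rw [mem_opt]
    rintro (⟨i, hi, hv⟩ | ⟨j, hj, hv⟩)
    · exact h2 i hi hv.symm
    · exact h3 j hj hv.symm
  · intro k hk
    rw [mem_opt]
    exact h1 k hk

set_option maxRecDepth 100000 in
set_option maxHeartbeats 4000000 in
lemma master : ∀ n ≤ 165,
    (∀ k < t (n + 2), (∃ i ≤ n, k = t i ^^^ t (n - i)) ∨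
        (∃ j ≤ n + 1, k = t j ^^^ 1 ^^^ t (n + 1 - j))) ∧
    (∀ i ≤ n, t i ^^^ t (n - i) ≠ t (n + 2)) ∧
    (∀ j ≤ n + 1, t j ^^^ 1 ^^^ t (n + 1 - j) ≠ t (n + 2)) := by decide

lemma base_check : ∀ n, 83 ≤ n → n ≤ 167 → t n = t (n - 12) := by decide

lemma G_eq_t : ∀ n, n ≤ 167 → G n = t n := by
  intro n
  induction n using Nat.strong_induction_on with
  | _ n ih =>
    match n with
    | 0 => intro _; rw [show G 0 = 0 by rw [G]]; decide
    | 1 => intro _; rw [show G 1 = 0 by rw [G]]; decide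
    | n + 2 =>
      intro hn
      obtain ⟨k1, k2, k3⟩ := master n (by omega)
      apply G_eq_of
      · intro k hk
        rcases k1 k hk with ⟨i, hi, hke⟩ | ⟨j, hj, hke⟩
        · exact Or.inl ⟨i, hi, by
            rw [ih i (by omega) (by omega), ih (n - i) (by omega) (by omega)]
            exact hke⟩
        · exact Or.inr ⟨j, hj, by
            rw [ih j (by omega) (by omega), ih (n + 1 - j) (by omega) (by omega)]
            exact hke⟩
      · intro i hi
        rw [ih i (by omega) (by omega), ih (n - i) (by omega) (by omega)]
        exact k2 i hi
      · intro j hj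
        rw [ih j (by omega) (by omega), ih (n + 1 - j) (by omega) (by omega)]
        exact k3 j hj

/-- **Eventual periodicity of Remove-a-Square Grundy numbers.** For every
`n ≥ 83`, `G n = G (n - 12)`. -/
theorem remove_a_square_grundy_periodic : ∀ n : ℕ, 83 ≤ n → G n = G (n - 12) := by
  intro n
  induction n using Nat.strong_induction_on with
  | _ n ih =>
    intro hn
    by_cases hsmall : n ≤ 167
    · rw [G_eq_t n hsmall, G_eq_t (n - 12) (by omega)]
      exact base_check n hn hsmall
    · push_neg at hsmall
      obtain ⟨m, rfl⟩ : ∃ m, n = m + 14 := ⟨n - 14, by omega⟩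
      have hm : 154 ≤ m := by omega
      rw [show m + 14 - 12 = m + 2 by omega]
      rw [show m + 14 = (m + 12) + 2 by ring, G_succ (m + 12), G_succ m]
      apply mex_congr
      intro v
      rw [mem_opt, mem_opt]
      constructor
      · rintro (⟨i, hi, rfl⟩ | ⟨j, hj, rfl⟩)
        · rcases le_or_gt (2 * i) (m + 12) with hc | hc
          · have h := ih (m + 12 - i) (by omega) (by omega)
            rw [show m + 12 - i - 12 = m - i by omega] at h
            exact Or.inl ⟨i, by omega, by rw [h]⟩
          · have h := ih i (by omega) (by omega)
            refine Or.inl ⟨i - 12, by omega, ?_⟩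
            rw [show m - (i - 12) = m + 12 - i by omega, h]
        · rcases le_or_gt (2 * j) (m + 13) with hc | hc
          · have h := ih (m + 12 + 1 - j) (by omega) (by omega)
            rw [show m + 12 + 1 - j - 12 = m + 1 - j by omega] at h
            exact Or.inr ⟨j, by omega, by rw [h]⟩
          · have h := ih j (by omega) (by omega)
            refine Or.inr ⟨j - 12, by omega, ?_⟩
            rw [show m + 1 - (j - 12) = m + 12 + 1 - j by omega, h]
      · rintro (⟨i, hi, rfl⟩ | ⟨j, hj, rfl⟩)
        · rcases le_or_gt (2 * i) m with hc | hc
          · have h := ih (m + 12 - i) (by omega) (by omega)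
            rw [show m + 12 - i - 12 = m - i by omega] at h
            exact Or.inl ⟨i, by omega, by rw [h]⟩
          · have h := ih (i + 12) (by omega) (by omega)
            rw [show i + 12 - 12 = i by omega] at h
            refine Or.inl ⟨i + 12, by omega, ?_⟩
            rw [show m + 12 - (i + 12) = m - i by omega, h]
        · rcases le_or_gt (2 * j) (m + 1) with hc | hc
          · have h := ih (m + 12 + 1 - j) (by omega) (by omega)
            rw [show m + 12 + 1 - j - 12 = m + 1 - j by omega] at h
            exact Or.inr ⟨j, by omega, by rw [h]⟩
          · have h := ih (j + 12) (by omega) (by omega)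
            rw [show j + 12 - 12 = j by omega] at h
            refine Or.inr ⟨j + 12, by omega, ?_⟩
            rw [show m + 12 + 1 - (j + 12) = m + 1 - j by omega, h]
end

section
/- Let n ≥ 2 be even and consider the Remove-an-Edge game on the path graph P_n with n vertices. The initial position (the full vertex set) is an N-position, i.e., the first player wins. -/
/-- A legal move in the Remove-an-Edge game on a simple graph `Γ`: from the set
`S` of remaining vertices, remove two vertices of `S` that are adjacent in `Γ`. -/
def EdgeMove {V : Type*} [DecidableEq V] (Γ : SimpleGraph V) (S T : Finset V) : Prop :=
  ∃ u v : V, u ∈ S ∧ v ∈ S ∧ Γ.Adj u v ∧ T = (S.erase u).erase v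

theorem edgeMove_lt {V : Type*} [DecidableEq V] (Γ : SimpleGraph V) :
    ∀ ⦃S T : Finset V⦄, EdgeMove Γ S T → T.card < S.card := by
  rintro S T ⟨u, v, hu, hv, hadj, rfl⟩
  exact lt_of_le_of_lt (Finset.card_le_card (Finset.erase_subset _ _))
    (Finset.card_erase_lt_of_mem hu)

/-- P-positions of the Remove-an-Edge game on the simple graph `Γ`. -/
def EdgeP {V : Type*} [DecidableEq V] (Γ : SimpleGraph V) : Finset V → Prop :=
  IsP Finset.card (EdgeMove Γ) (edgeMove_lt Γ)

lemma edgeP_iff {V : Type*} [DecidableEq V] (Γ : SimpleGraph V) (S : Finset V) :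
    EdgeP Γ S ↔ ∀ T, EdgeMove Γ S T → ¬ EdgeP Γ T := by
  rw [EdgeP, IsP]

lemma edgeP_symm {V : Type*} [DecidableEq V] (Γ : SimpleGraph V) (σ : V → V)
    (hσσ : ∀ v, σ (σ v) = v) (hA : ∀ u v, Γ.Adj u v → Γ.Adj (σ u) (σ v)) :
    ∀ (k : ℕ) (S : Finset V), S.card ≤ k → (∀ v ∈ S, σ v ∈ S) →
      (∀ v ∈ S, σ v ≠ v) → (∀ u ∈ S, ∀ v ∈ S, Γ.Adj u v → σ u ≠ v) →
      EdgeP Γ S := by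
  intro k
  induction k with
  | zero =>
    intro S hcard hclosed hnofix hne
    rw [edgeP_iff]
    rintro T ⟨u, v, hu, hv, hadj, rfl⟩ _
    exact absurd (Finset.card_pos.mpr ⟨u, hu⟩) (by omega)
  | succ k ih =>
    intro S hcard hclosed hnofix hne
    rw [edgeP_iff]
    rintro T ⟨u, v, hu, hv, hadj, rfl⟩ hP
    set T := (S.erase u).erase v with hT
    -- respond with σ u, σ v
    have huv : u ≠ v := hadj.ne
    have hσu : σ u ∈ T := by
      simp only [hT, Finset.mem_erase]
      exact ⟨hne u hu v hv hadj, hnofix u hu, hclosed u hu⟩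
    have hσv : σ v ∈ T := by
      simp only [hT, Finset.mem_erase]
      refine ⟨hnofix v hv, ?_, hclosed v hv⟩
      exact fun h => hne v hv u hu hadj.symm h
    have hadj' : Γ.Adj (σ u) (σ v) := hA u v hadj
    have hmove : EdgeMove Γ T ((T.erase (σ u)).erase (σ v)) :=
      ⟨σ u, σ v, hσu, hσv, hadj', rfl⟩
    refine (edgeP_iff Γ T).mp hP _ hmove ?_
    set T' := (T.erase (σ u)).erase (σ v) with hT'
    have hsub : T' ⊆ S := by
      intro x hx
      simp only [hT', hT, Finset.mem_erase] at hx
      exact hx.2.2.2.2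
    have hmem : ∀ x, x ∈ T' ↔ x ∈ S ∧ x ≠ u ∧ x ≠ v ∧ x ≠ σ u ∧ x ≠ σ v := by
      intro x
      simp only [hT', hT, Finset.mem_erase]
      tauto
    have hinj : ∀ a b, σ a = σ b → a = b := by
      intro a b h
      have := congrArg σ h
      rwa [hσσ, hσσ] at this
    apply ih
    · have h1 : T'.card < T.card := Finset.card_lt_card (by
        refine Finset.ssubset_iff_of_subset (fun x hx => ?_) |>.mpr ⟨σ u, hσu, ?_⟩
        · simp only [hT', Finset.mem_erase] at hx; exact hx.2.2
        · simp [hT', hadj'.ne])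
      have h2 : T.card < S.card := by
        refine lt_of_le_of_lt (Finset.card_le_card (Finset.erase_subset _ _)) ?_
        exact Finset.card_erase_lt_of_mem hu
      omega
    · intro x hx
      rw [hmem] at hx ⊢
      obtain ⟨hxS, h1, h2, h3, h4⟩ := hx
      exact ⟨hclosed x hxS,
        fun h => h3 ((hσσ x).symm.trans (congrArg σ h)),
        fun h => h4 ((hσσ x).symm.trans (congrArg σ h)),
        fun h => h1 (hinj _ _ h),
        fun h => h2 (hinj _ _ h)⟩
    · intro x hx; exact hnofix x (hsub hx)
    · intro a ha b hb hab; exact hne a (hsub ha) b (hsub hb) hab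

/-- **Remove-an-Edge on paths of even length.** For every even `n ≥ 2`, the
initial position of the Remove-an-Edge game on the path graph `P_n` with `n`
vertices is an N-position, i.e., the first player wins. -/
theorem remove_an_edge_path_even (n : ℕ) (hn : 2 ≤ n) (heven : Even n) :
    ¬ EdgeP (SimpleGraph.pathGraph n) Finset.univ := by
  obtain ⟨m, hm⟩ := heven
  intro hP
  set u : Fin n := ⟨n / 2 - 1, by omega⟩ with hu
  set v : Fin n := ⟨n / 2, by omega⟩ with hv
  have huval : (u : ℕ) = n / 2 - 1 := rfl
  have hvval : (v : ℕ) = n / 2 := rfl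
  have hrev : ∀ x : Fin n, (Fin.rev x : ℕ) = n - (x + 1) := fun x => Fin.val_rev x
  have hadj : (SimpleGraph.pathGraph n).Adj u v := by
    rw [SimpleGraph.pathGraph_adj]
    left; rw [huval, hvval]; omega
  have hmove : EdgeMove (SimpleGraph.pathGraph n) Finset.univ
      ((Finset.univ.erase u).erase v) :=
    ⟨u, v, Finset.mem_univ _, Finset.mem_univ _, hadj, rfl⟩
  refine (edgeP_iff _ _).mp hP _ hmove ?_
  refine edgeP_symm _ Fin.rev (fun x => Fin.rev_rev x) ?_ n _ ?_ ?_ ?_ ?_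
  · intro a b hab
    rw [SimpleGraph.pathGraph_adj] at hab ⊢
    have ha := a.isLt
    have hb := b.isLt
    rw [hrev a, hrev b]
    omega
  · exact le_trans (Finset.card_le_card (Finset.erase_subset _ _))
      (le_trans (Finset.card_le_card (Finset.erase_subset _ _)) (by simp))
  · intro x hx
    simp only [Finset.mem_erase, Finset.mem_univ, and_true] at hx ⊢
    obtain ⟨hxv, hxu⟩ := hx
    have hxv' : (x : ℕ) ≠ (v : ℕ) := fun h => hxv (Fin.ext h)
    have hxu' : (x : ℕ) ≠ (u : ℕ) := fun h => hxu (Fin.ext h)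
    have := x.isLt
    constructor
    · intro h
      have h' := congrArg Fin.val h
      rw [hrev x, hvval] at h'
      rw [huval] at hxu'
      omega
    · intro h
      have h' := congrArg Fin.val h
      rw [hrev x, huval] at h'
      rw [hvval] at hxv'
      omega
  · intro x _ h
    have h' := congrArg Fin.val h
    rw [hrev x] at h'
    have := x.isLt
    omega
  · intro a ha b hb hab h
    simp only [Finset.mem_erase, Finset.mem_univ, and_true] at ha hb
    have ha1 : (a : ℕ) ≠ (v : ℕ) := fun h => ha.1 (Fin.ext h)
    have ha2 : (a : ℕ) ≠ (u : ℕ) := fun h => ha.2 (Fin.ext h)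
    have hb1 : (b : ℕ) ≠ (v : ℕ) := fun h => hb.1 (Fin.ext h)
    have hb2 : (b : ℕ) ≠ (u : ℕ) := fun h => hb.2 (Fin.ext h)
    rw [SimpleGraph.pathGraph_adj] at hab
    have h' := congrArg Fin.val h
    rw [hrev a] at h'
    have := a.isLt
    have := b.isLt
    rw [huval] at ha2 hb2
    rw [hvval] at ha1 hb1
    omega
end

section
/- For every integer n > 1, the initial position {1, 2, …, n} of the No-Factor game is a P-position, i.e., the second player has a winning strategy. -/
/-- A legal move in the No-Factor game: remove from `S` a nonempty subset `R`
such that no element of `R` has a proper factor in `S` (for all `t ∈ R` and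
`d ∈ S`, `d ∣ t` implies `d = t`). -/
def NoFactorMove (S T : Finset ℕ) : Prop :=
  ∃ R : Finset ℕ, R.Nonempty ∧ R ⊆ S ∧ (∀ t ∈ R, ∀ d ∈ S, d ∣ t → d = t) ∧ T = S \ R

theorem noFactorMove_lt : ∀ ⦃S T : Finset ℕ⦄, NoFactorMove S T → T.card < S.card := by
  rintro S T ⟨R, hR, hRS, _, rfl⟩
  exact Finset.card_lt_card (Finset.sdiff_ssubset hRS hR)

/-- P-positions of the No-Factor game. -/
def NoFactorP : Finset ℕ → Prop := IsP Finset.card NoFactorMove noFactorMove_lt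

lemma noFactorP_iff (S : Finset ℕ) :
    NoFactorP S ↔ ∀ T, NoFactorMove S T → ¬ NoFactorP T := by
  rw [NoFactorP, IsP]

lemma not_noFactorP_iff (S : Finset ℕ) :
    ¬ NoFactorP S ↔ ∃ T, NoFactorMove S T ∧ NoFactorP T := by
  rw [noFactorP_iff]; push_neg; rfl

/-- Strategy stealing: a position containing an "isolated" element `p`
(no proper factor of `p` in `S`, and `p` divides nothing else in `S`)
is an N-position. -/
lemma isolated_not_P (S : Finset ℕ) (p : ℕ) (hp : p ∈ S)
    (hmin : ∀ d ∈ S, d ∣ p → d = p) (hmax : ∀ t ∈ S, p ∣ t → t = p) :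
    ¬ NoFactorP S := by
  by_cases h : NoFactorP (S \ {p})
  · rw [noFactorP_iff]
    push_neg
    refine ⟨S \ {p}, ⟨{p}, ⟨p, Finset.mem_singleton_self p⟩,
      Finset.singleton_subset_iff.2 hp, ?_, rfl⟩, h⟩
    intro t ht d hd hdt
    rw [Finset.mem_singleton] at ht; subst ht
    exact hmin d hd hdt
  · rw [not_noFactorP_iff] at h
    obtain ⟨T, ⟨R, hRne, hRsub, hRmin, rfl⟩, hT⟩ := h
    rw [noFactorP_iff]
    push_neg
    refine ⟨S \ (R ∪ {p}), ⟨R ∪ {p}, ⟨p, Finset.mem_union_right _ (Finset.mem_singleton_self p)⟩,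
      ?_, ?_, rfl⟩, ?_⟩
    · intro x hx
      rcases Finset.mem_union.1 hx with hx | hx
      · exact (Finset.mem_sdiff.1 (hRsub hx)).1
      · rw [Finset.mem_singleton] at hx; subst hx; exact hp
    · intro t ht d hd hdt
      rcases Finset.mem_union.1 ht with ht | ht
      · have htS := Finset.mem_sdiff.1 (hRsub ht)
        by_cases hdp : d = p
        · subst hdp
          exact absurd (hmax t htS.1 hdt) (Finset.notMem_singleton.1 htS.2)
        · exact hRmin t ht d (Finset.mem_sdiff.2 ⟨hd, Finset.notMem_singleton.2 hdp⟩) hdt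
      · rw [Finset.mem_singleton] at ht; subst ht
        exact hmin d hd hdt
    · have : S \ (R ∪ {p}) = (S \ {p}) \ R := by
        ext x
        simp only [Finset.mem_sdiff, Finset.mem_union, Finset.mem_singleton]
        tauto
      rwa [this]

/-- **The second player wins the No-Factor game.** For every integer `n > 1`,
the initial position `{1, 2, …, n}` of the No-Factor game is a P-position. -/
theorem no_factor_second_player_wins (n : ℕ) (hn : 1 < n) :
    NoFactorP (Finset.Icc 1 n) := by
  rw [noFactorP_iff]
  rintro T ⟨R, hRne, hRsub, hRmin, rfl⟩
  -- the only possible R is {1}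
  have h1 : (1 : ℕ) ∈ Finset.Icc 1 n := Finset.mem_Icc.2 ⟨le_refl 1, hn.le⟩
  have hR1 : R = {1} := by
    obtain ⟨x, hx⟩ := hRne
    have hx1 : x = 1 := (hRmin x hx 1 h1 (one_dvd x)).symm
    apply Finset.eq_singleton_iff_unique_mem.2
    refine ⟨hx1 ▸ hx, fun y hy => (hRmin y hy 1 h1 (one_dvd y)).symm⟩
  subst hR1
  have hset : Finset.Icc 1 n \ {1} = Finset.Icc 2 n := by
    ext x
    simp only [Finset.mem_sdiff, Finset.mem_Icc, Finset.mem_singleton]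
    omega
  rw [hset]
  -- take the largest prime p ≤ n
  set P := (Finset.Icc 2 n).filter Nat.Prime with hP
  have hPne : P.Nonempty :=
    ⟨2, Finset.mem_filter.2 ⟨Finset.mem_Icc.2 ⟨le_refl 2, hn⟩, Nat.prime_two⟩⟩
  set p := P.max' hPne with hpdef
  have hpP : p ∈ P := P.max'_mem hPne
  obtain ⟨hpIcc, hpprime⟩ := Finset.mem_filter.1 hpP
  obtain ⟨hp2, hpn⟩ := Finset.mem_Icc.1 hpIcc
  have hbig : n < 2 * p := by
    by_contra h
    push_neg at h
    obtain ⟨q, hq, hpq, hq2p⟩ := Nat.exists_prime_lt_and_le_two_mul p hpprime.ne_zero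
    have hqP : q ∈ P := Finset.mem_filter.2
      ⟨Finset.mem_Icc.2 ⟨hq.two_le, hq2p.trans h⟩, hq⟩
    exact absurd (P.le_max' q hqP) (not_le.2 hpq)
  refine isolated_not_P _ p hpIcc ?_ ?_
  · intro d hd hdvd
    rcases (Nat.Prime.eq_one_or_self_of_dvd hpprime d hdvd) with h | h
    · have := (Finset.mem_Icc.1 hd).1; omega
    · exact h
  · intro t ht hpt
    obtain ⟨k, rfl⟩ := hpt
    have htn := (Finset.mem_Icc.1 ht).2
    have ht2 := (Finset.mem_Icc.1 ht).1
    have hk : k = 1 := by nlinarith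
    subst hk
    omega
end
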